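/- arXiv:2405.17412 — 7 statements merged into one kernel-verified Lean document; each statement's English description precedes it below -/
import Mathlib

section
/- The variance of the squared distance equals 2d times the square of the kernel distance: ∫ (d²_{ij}(ω) − d·k̃_{ij})² dμ(ω) = 2d · (k̃_{ij})², where k̃_{ij} = K_{ii} + K_{jj} − 2K_{ij}. -/
open MeasureTheory ProbabilityTheory Matrix Real
open scoped ENNReal

noncomputable def Jint (p : ℕ) : ℝ := ∫ x : ℝ, x ^ p * Real.exp (-(1/2) * x ^ 2)

lemma J_integrable (p : ℕ) : Integrable (fun x : ℝ => x ^ p * Real.exp (-(1/2) * x ^ 2)) := by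
  have h := integrable_rpow_mul_exp_neg_mul_sq (b := 1/2) (by norm_num) (s := (p : ℝ))
    (lt_of_lt_of_le (by norm_num) (Nat.cast_nonneg p))
  simpa [Real.rpow_natCast] using h

lemma J_zero : Jint 0 = Real.sqrt (2 * π) := by
  simp only [Jint, pow_zero, one_mul]
  rw [show ∫ x : ℝ, Real.exp (-(1/2) * x ^ 2) = Real.sqrt (π / (1/2)) from integral_gaussian _]
  rw [div_div_eq_mul_div, div_one, mul_comm]

lemma J_one : Jint 1 = 0 := by
  have hd : ∀ x : ℝ, HasDerivAt (fun x : ℝ => -Real.exp (-(1/2) * x ^ 2))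
      (x ^ 1 * Real.exp (-(1/2) * x ^ 2)) x := by
    intro x
    have h1 : HasDerivAt (fun x : ℝ => -(1/2) * x ^ 2) (-(1/2) * (2 * x ^ 1)) x :=
      (hasDerivAt_pow 2 x).const_mul _
    have := (h1.exp).neg
    exact this.congr_deriv (by ring)
  have := integral_eq_zero_of_hasDerivAt_of_integrable hd (J_integrable 1)
    ((integrable_exp_neg_mul_sq (by norm_num : (0:ℝ) < 1/2)).neg)
  simpa [Jint] using this

lemma J_rec (m : ℕ) : Jint (m + 2) = (m + 1) * Jint m := by
  have hd : ∀ x : ℝ, HasDerivAt (fun x : ℝ => x ^ (m+1) * Real.exp (-(1/2) * x ^ 2))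
      ((m+1 : ℝ) * x ^ m * Real.exp (-(1/2) * x ^ 2)
        - x ^ (m+2) * Real.exp (-(1/2) * x ^ 2)) x := by
    intro x
    have h1 : HasDerivAt (fun x : ℝ => -(1/2) * x ^ 2) (-(1/2) * (2 * x ^ 1)) x :=
      (hasDerivAt_pow 2 x).const_mul _
    have h2 := (hasDerivAt_pow (m+1) x).mul h1.exp
    refine h2.congr_deriv ?_
    simp only [Nat.add_sub_cancel]
    push_cast
    ring
  have hmm : Integrable (fun x : ℝ => (m+1 : ℝ) * x ^ m * Real.exp (-(1/2) * x ^ 2)) := by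
    simpa [mul_assoc] using (J_integrable m).const_mul ((m : ℝ) + 1)
  have hint : Integrable (fun x : ℝ => (m+1 : ℝ) * x ^ m * Real.exp (-(1/2) * x ^ 2)
      - x ^ (m+2) * Real.exp (-(1/2) * x ^ 2)) := hmm.sub (J_integrable (m+2))
  have h0 := integral_eq_zero_of_hasDerivAt_of_integrable hd hint (J_integrable (m+1))
  rw [integral_sub hmm (J_integrable (m+2))] at h0
  have : ∫ x : ℝ, (m+1 : ℝ) * x ^ m * Real.exp (-(1/2) * x ^ 2)
      = (m+1 : ℝ) * Jint m := by
    simp_rw [mul_assoc, integral_const_mul]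
    rfl
  rw [this] at h0
  have : Jint (m + 2) = ∫ x : ℝ, x ^ (m+2) * Real.exp (-(1/2) * x ^ 2) := rfl
  rw [this]
  linarith [h0]

noncomputable def gmom (p : ℕ) : ℝ := ∫ x : ℝ, x ^ p ∂(gaussianReal 0 1)

lemma pdf_eq (x : ℝ) : gaussianPDFReal 0 1 x
    = (Real.sqrt (2 * π))⁻¹ * Real.exp (-(1/2) * x ^ 2) := by
  simp only [gaussianPDFReal, NNReal.coe_one, mul_one, sub_zero]
  rw [show -x ^ 2 / 2 = -(1/2) * x ^ 2 by ring]

lemma pdf_meas : Measurable fun x : ℝ => (gaussianPDFReal 0 1 x).toNNReal :=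
  (measurable_gaussianPDFReal 0 1).real_toNNReal

lemma gaussianReal_eq : gaussianReal 0 1
    = (volume : Measure ℝ).withDensity (fun x => ((gaussianPDFReal 0 1 x).toNNReal : ℝ≥0∞)) := by
  rw [gaussianReal_of_var_ne_zero 0 one_ne_zero]
  rfl

lemma gmom_eq (p : ℕ) : gmom p = (Real.sqrt (2 * π))⁻¹ * Jint p := by
  rw [gmom, gaussianReal_eq, integral_withDensity_eq_integral_smul pdf_meas]
  simp_rw [NNReal.smul_def, Real.coe_toNNReal _ (gaussianPDFReal_nonneg 0 1 _), smul_eq_mul,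
    pdf_eq, mul_assoc, integral_const_mul]
  rw [Jint]
  congr 1
  exact integral_congr_ae (ae_of_all _ fun x => by ring)

lemma gmom_integrable (p : ℕ) : Integrable (fun x : ℝ => x ^ p) (gaussianReal 0 1) := by
  rw [gaussianReal_eq, integrable_withDensity_iff_integrable_smul pdf_meas]
  have : Integrable (fun x : ℝ => (Real.sqrt (2 * π))⁻¹ * (x ^ p * Real.exp (-(1/2) * x ^ 2))) :=
    (J_integrable p).const_mul _
  refine this.congr (ae_of_all _ fun x => ?_)
  simp_rw [NNReal.smul_def, Real.coe_toNNReal _ (gaussianPDFReal_nonneg 0 1 _), smul_eq_mul,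
    pdf_eq]
  ring

lemma sqrt2pi_ne : Real.sqrt (2 * π) ≠ 0 := by
  positivity

lemma gmom_zero : gmom 0 = 1 := by rw [gmom_eq, J_zero, inv_mul_cancel₀ sqrt2pi_ne]
lemma gmom_one : gmom 1 = 0 := by rw [gmom_eq, J_one, mul_zero]
lemma gmom_two : gmom 2 = 1 := by
  have := J_rec 0
  rw [gmom_eq, show (2:ℕ) = 0 + 2 from rfl, this, J_zero]
  push_cast
  field_simp
  norm_num
lemma gmom_three : gmom 3 = 0 := by
  have := J_rec 1
  rw [gmom_eq, show (3:ℕ) = 1 + 2 from rfl, this, J_one, mul_zero, mul_zero]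
lemma gmom_four : gmom 4 = 3 := by
  have h2 := J_rec 2
  have h0 := J_rec 0
  rw [gmom_eq, show (4:ℕ) = 2 + 2 from rfl, h2, show Jint 2 = Jint (0 + 2) from rfl, h0, J_zero]
  push_cast
  field_simp
  ring


variable {ι : Type*} [Fintype ι] [DecidableEq ι]

section PiFacts

lemma sf : SigmaFinite (gaussianReal 0 1) := inferInstance

lemma pi_pow_integrable (e : ι → ℕ) :
    Integrable (fun x : ι → ℝ => ∏ p, (x p) ^ (e p))
      (Measure.pi fun _ : ι => gaussianReal 0 1) := by
  letI : MeasureSpace ℝ := ⟨gaussianReal 0 1⟩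
  haveI : SigmaFinite (volume : Measure ℝ) := sf
  have h := Integrable.fintype_prod (𝕜 := ℝ) (f := fun p (t : ℝ) => t ^ (e p))
    (fun p => gmom_integrable (e p))
  have hv : (volume : Measure (ι → ℝ)) = Measure.pi fun _ : ι => gaussianReal 0 1 := by
    rw [volume_pi]; rfl
  exact h

lemma pi_pow_integral (e : ι → ℕ) :
    ∫ x : ι → ℝ, ∏ p, (x p) ^ (e p) ∂(Measure.pi fun _ : ι => gaussianReal 0 1)
      = ∏ p, gmom (e p) := by
  letI : MeasureSpace ℝ := ⟨gaussianReal 0 1⟩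
  haveI : SigmaFinite (volume : Measure ℝ) := sf
  have h := integral_fintype_prod_eq_prod (𝕜 := ℝ) (f := fun p (t : ℝ) => t ^ (e p))
    (μ := fun _ => gaussianReal 0 1)
  have hv : (volume : Measure (ι → ℝ)) = Measure.pi fun _ : ι => gaussianReal 0 1 := by
    rw [volume_pi]; rfl
  exact h

end PiFacts

def e2 (q1 q2 : ι) : ι → ℕ := fun p => (if p = q1 then 1 else 0) + (if p = q2 then 1 else 0)

def e4 (q1 q2 q3 q4 : ι) : ι → ℕ := fun p =>
  (if p = q1 then 1 else 0) + (if p = q2 then 1 else 0)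
    + (if p = q3 then 1 else 0) + (if p = q4 then 1 else 0)

lemma prod_pow_single (x : ι → ℝ) (q : ι) :
    (∏ p, x p ^ (if p = q then 1 else 0)) = x q := by
  rw [Finset.prod_congr rfl (fun p _ => show x p ^ (if p = q then 1 else 0)
    = if p = q then x p else 1 by split_ifs <;> simp)]
  simp

lemma prod_pow_e2 (x : ι → ℝ) (q1 q2 : ι) :
    (∏ p, x p ^ (e2 q1 q2 p)) = x q1 * x q2 := by
  simp only [e2, pow_add, Finset.prod_mul_distrib, prod_pow_single]

lemma prod_pow_e4 (x : ι → ℝ) (q1 q2 q3 q4 : ι) :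
    (∏ p, x p ^ (e4 q1 q2 q3 q4 p)) = x q1 * x q2 * x q3 * x q4 := by
  simp only [e4, pow_add, Finset.prod_mul_distrib, prod_pow_single]

lemma prodf_single (q : ι) (m : ℕ) :
    (∏ p, gmom (if p = q then m else 0)) = gmom m := by
  rw [Finset.prod_congr rfl (fun p _ => show gmom (if p = q then m else 0)
    = if p = q then gmom m else 1 by split_ifs <;> simp [gmom_zero])]
  simp

lemma prodf_pair {a b : ι} (hab : a ≠ b) (m m' : ℕ) :
    (∏ p, gmom (if p = a then m else if p = b then m' else 0)) = gmom m * gmom m' := by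
  rw [Finset.prod_congr rfl (fun p _ => show gmom (if p = a then m else if p = b then m' else 0)
    = (if p = a then gmom m else 1) * (if p = b then gmom m' else 1) by
      split_ifs with h1 h2 <;> simp_all [gmom_zero])]
  rw [Finset.prod_mul_distrib]
  simp

lemma wick2_integrable (q1 q2 : ι) :
    Integrable (fun x : ι → ℝ => x q1 * x q2) (Measure.pi fun _ : ι => gaussianReal 0 1) := by
  have := pi_pow_integrable (e2 q1 q2)
  simpa only [prod_pow_e2] using this

lemma wick4_integrable (q1 q2 q3 q4 : ι) :
    Integrable (fun x : ι → ℝ => x q1 * x q2 * x q3 * x q4)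
      (Measure.pi fun _ : ι => gaussianReal 0 1) := by
  have := pi_pow_integrable (e4 q1 q2 q3 q4)
  simpa only [prod_pow_e4] using this


lemma wick2 (q1 q2 : ι) :
    ∫ x : ι → ℝ, x q1 * x q2 ∂(Measure.pi fun _ : ι => gaussianReal 0 1)
      = if q1 = q2 then 1 else 0 := by
  have h := pi_pow_integral (e2 q1 q2)
  simp only [prod_pow_e2] at h
  rw [h]
  by_cases h12 : q1 = q2
  · subst h12
    rw [Finset.prod_congr rfl (fun p _ => show gmom (e2 q1 q1 p)
      = gmom (if p = q1 then 2 else 0) by congr 1; simp only [e2]; split_ifs <;> rfl)]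
    rw [prodf_single, gmom_two, if_pos rfl]
  · have h21 : ¬ q1 = q2 := h12
    rw [Finset.prod_eq_zero (Finset.mem_univ q1)
      (by rw [show e2 q1 q2 q1 = 1 by simp [e2, h21]]; exact gmom_one), if_neg h12]

lemma wick4 (q1 q2 q3 q4 : ι) :
    ∫ x : ι → ℝ, x q1 * x q2 * x q3 * x q4 ∂(Measure.pi fun _ : ι => gaussianReal 0 1)
      = (if q1 = q2 then (1:ℝ) else 0) * (if q3 = q4 then 1 else 0)
        + (if q1 = q3 then 1 else 0) * (if q2 = q4 then 1 else 0)
        + (if q1 = q4 then 1 else 0) * (if q2 = q3 then 1 else 0) := by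
  have h := pi_pow_integral (e4 q1 q2 q3 q4)
  simp only [prod_pow_e4] at h
  rw [h]
  by_cases h12 : q1 = q2
  · subst h12
    by_cases h13 : q1 = q3
    · subst h13
      by_cases h14 : q1 = q4
      · subst h14
        rw [Finset.prod_congr rfl (fun p _ => show gmom (e4 q1 q1 q1 q1 p)
          = gmom (if p = q1 then 4 else 0) by congr 1; simp only [e4]; split_ifs <;> rfl)]
        rw [prodf_single, gmom_four]
        norm_num
      · have h41 : ¬ q4 = q1 := fun h => h14 h.symm
        rw [Finset.prod_eq_zero (Finset.mem_univ q4)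
          (by rw [show e4 q1 q1 q1 q4 q4 = 1 by simp [e4, h41]]; exact gmom_one)]
        simp [h14, h41]
    · by_cases h14 : q1 = q4
      · subst h14
        have h31 : ¬ q3 = q1 := fun h => h13 h.symm
        rw [Finset.prod_eq_zero (Finset.mem_univ q3)
          (by rw [show e4 q1 q1 q3 q1 q3 = 1 by simp [e4, h31]]; exact gmom_one)]
        simp [h13, h31]
      · by_cases h34 : q3 = q4
        · subst h34
          rw [Finset.prod_congr rfl (fun p _ => show gmom (e4 q1 q1 q3 q3 p)
            = gmom (if p = q1 then 2 else if p = q3 then 2 else 0) by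
              congr 1; simp only [e4]; split_ifs with a b <;> simp_all)]
          rw [prodf_pair h13, gmom_two]
          simp [h13]
        · have h31 : ¬ q3 = q1 := fun h => h13 h.symm
          rw [Finset.prod_eq_zero (Finset.mem_univ q3)
            (by rw [show e4 q1 q1 q3 q4 q3 = 1 by simp [e4, h31, h34]]; exact gmom_one)]
          simp [h13, h31, h34]
  · by_cases h13 : q1 = q3
    · subst h13
      by_cases h24 : q2 = q4
      · subst h24
        have h21 : ¬ q2 = q1 := fun h => h12 h.symm
        rw [Finset.prod_congr rfl (fun p _ => show gmom (e4 q1 q2 q1 q2 p)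
          = gmom (if p = q1 then 2 else if p = q2 then 2 else 0) by
            congr 1; simp only [e4]; split_ifs with a b <;> simp_all)]
        rw [prodf_pair h12, gmom_two]
        simp [h12, h21]
      · have h21 : ¬ q2 = q1 := fun h => h12 h.symm
        rw [Finset.prod_eq_zero (Finset.mem_univ q2)
          (by rw [show e4 q1 q2 q1 q4 q2 = 1 by simp [e4, h21, h24]]; exact gmom_one)]
        simp [h12, h24, h21]
    · by_cases h14 : q1 = q4
      · subst h14
        by_cases h23 : q2 = q3
        · subst h23
          have h21 : ¬ q2 = q1 := fun h => h12 h.symm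
          rw [Finset.prod_congr rfl (fun p _ => show gmom (e4 q1 q2 q2 q1 p)
            = gmom (if p = q1 then 2 else if p = q2 then 2 else 0) by
              congr 1; simp only [e4]; split_ifs with a b <;> simp_all)]
          rw [prodf_pair h12, gmom_two]
          simp [h12, h21]
        · have h21 : ¬ q2 = q1 := fun h => h12 h.symm
          rw [Finset.prod_eq_zero (Finset.mem_univ q2)
            (by rw [show e4 q1 q2 q3 q1 q2 = 1 by simp [e4, h21, h23]]; exact gmom_one)]
          simp [h12, h23, h13, h21]
      · rw [Finset.prod_eq_zero (Finset.mem_univ q1)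
          (by rw [show e4 q1 q2 q3 q4 q1 = 1 by simp [e4, h12, h13, h14]]; exact gmom_one)]
        simp [h12, h13, h14]

lemma ite_pair1 {k d : ℕ} (a b : Fin k) (q : Fin d) :
    (if ((a,q) : Fin k × Fin d) = (b,q) then (1:ℝ) else 0) = if a = b then 1 else 0 := by
  by_cases h : a = b <;> simp [Prod.ext_iff, h]

lemma ite_pair2 {k d : ℕ} (a c : Fin k) (q r : Fin d) :
    (if ((a,q) : Fin k × Fin d) = (c,r) then (1:ℝ) else 0)
      = (if q = r then (1:ℝ) else 0) * (if a = c then 1 else 0) := by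
  by_cases h : q = r <;> by_cases h2 : a = c <;> simp [Prod.ext_iff, h, h2]

lemma main_calc (k d : ℕ) (v : Fin k → ℝ) :
    ∫ ω : (Fin k × Fin d) → ℝ,
      ((∑ c : Fin d, (∑ l : Fin k, v l * ω (l, c)) ^ 2)
        - (d : ℝ) * (∑ l : Fin k, v l ^ 2)) ^ 2
      ∂(Measure.pi fun _ : Fin k × Fin d => gaussianReal 0 1)
    = 2 * (d : ℝ) * (∑ l : Fin k, v l ^ 2) ^ 2 := by
  set μ := (Measure.pi fun _ : Fin k × Fin d => gaussianReal 0 1) with hμdef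
  set s : ℝ := ∑ l : Fin k, v l ^ 2 with hs
  -- expansion of the square of a single Z
  have expand2 : ∀ (q : Fin d) (ω : (Fin k × Fin d) → ℝ),
      (∑ l : Fin k, v l * ω (l, q)) ^ 2
        = ∑ l1, ∑ l2, (v l1 * v l2) * (ω (l1, q) * ω (l2, q)) := by
    intro q ω
    rw [sq, Finset.sum_mul_sum]
    exact Finset.sum_congr rfl fun l1 _ => Finset.sum_congr rfl fun l2 _ => by ring
  have expand4 : ∀ (q r : Fin d) (ω : (Fin k × Fin d) → ℝ),
      (∑ l : Fin k, v l * ω (l, q)) ^ 2 * (∑ l : Fin k, v l * ω (l, r)) ^ 2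
        = ∑ l1, ∑ l2, ∑ l3, ∑ l4, (v l1 * v l2 * v l3 * v l4)
            * (ω (l1, q) * ω (l2, q) * ω (l3, r) * ω (l4, r)) := by
    intro q r ω
    rw [expand2 q, expand2 r, Finset.sum_mul_sum]
    refine Finset.sum_congr rfl fun l1 _ => ?_
    rw [Finset.sum_comm]
    refine Finset.sum_congr rfl fun l2 _ => ?_
    rw [Finset.sum_mul_sum]
    exact Finset.sum_congr rfl fun l3 _ => Finset.sum_congr rfl fun l4 _ => by ring
  -- integrability
  have IntZ2 : ∀ q : Fin d,
      Integrable (fun ω : (Fin k × Fin d) → ℝ => (∑ l : Fin k, v l * ω (l, q)) ^ 2) μ := by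
    intro q
    have h : Integrable (fun ω : (Fin k × Fin d) → ℝ =>
        ∑ l1, ∑ l2, (v l1 * v l2) * (ω (l1, q) * ω (l2, q))) μ :=
      integrable_finset_sum _ fun l1 _ => integrable_finset_sum _ fun l2 _ =>
        ((wick2_integrable (l1, q) (l2, q)).const_mul _)
    exact h.congr (ae_of_all _ fun ω => (expand2 q ω).symm)
  have IntZ4 : ∀ q r : Fin d,
      Integrable (fun ω : (Fin k × Fin d) → ℝ =>
        (∑ l : Fin k, v l * ω (l, q)) ^ 2 * (∑ l : Fin k, v l * ω (l, r)) ^ 2) μ := by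
    intro q r
    have h : Integrable (fun ω : (Fin k × Fin d) → ℝ =>
        ∑ l1, ∑ l2, ∑ l3, ∑ l4, (v l1 * v l2 * v l3 * v l4)
          * (ω (l1, q) * ω (l2, q) * ω (l3, r) * ω (l4, r))) μ :=
      integrable_finset_sum _ fun l1 _ => integrable_finset_sum _ fun l2 _ =>
        integrable_finset_sum _ fun l3 _ => integrable_finset_sum _ fun l4 _ =>
        ((wick4_integrable (l1, q) (l2, q) (l3, r) (l4, r)).const_mul _)
    exact h.congr (ae_of_all _ fun ω => (expand4 q r ω).symm)
  -- first moment
  have E1 : ∀ q : Fin d, ∫ ω, (∑ l : Fin k, v l * ω (l, q)) ^ 2 ∂μ = s := by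
    intro q
    rw [integral_congr_ae (ae_of_all _ (expand2 q))]
    rw [integral_finset_sum _ (fun l1 _ => integrable_finset_sum _ fun l2 _ =>
      (wick2_integrable (l1, q) (l2, q)).const_mul _)]
    have : ∀ l1 : Fin k, ∫ ω, (∑ l2, (v l1 * v l2) * (ω (l1, q) * ω (l2, q))) ∂μ
        = ∑ l2, (v l1 * v l2) * (if l1 = l2 then (1:ℝ) else 0) := by
      intro l1
      rw [integral_finset_sum _ (fun l2 _ => (wick2_integrable (l1, q) (l2, q)).const_mul _)]
      refine Finset.sum_congr rfl fun l2 _ => ?_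
      rw [integral_const_mul, wick2]
      simp [Prod.ext_iff]
    rw [Finset.sum_congr rfl fun l1 _ => this l1]
    simp [mul_ite, mul_one, mul_zero, Finset.sum_ite_eq, hs, sq]
  -- second moments
  have E2 : ∀ q r : Fin d,
      ∫ ω, (∑ l : Fin k, v l * ω (l, q)) ^ 2 * (∑ l : Fin k, v l * ω (l, r)) ^ 2 ∂μ
        = s ^ 2 + (if q = r then 2 * s ^ 2 else 0) := by
    intro q r
    rw [integral_congr_ae (ae_of_all _ (expand4 q r))]
    rw [integral_finset_sum _ (fun l1 _ => integrable_finset_sum _ fun l2 _ =>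
      integrable_finset_sum _ fun l3 _ => integrable_finset_sum _ fun l4 _ =>
      (wick4_integrable (l1, q) (l2, q) (l3, r) (l4, r)).const_mul _)]
    have h1 : ∀ l1 : Fin k,
        ∫ ω, (∑ l2, ∑ l3, ∑ l4, (v l1 * v l2 * v l3 * v l4)
            * (ω (l1, q) * ω (l2, q) * ω (l3, r) * ω (l4, r))) ∂μ
          = ∑ l2, ∑ l3, ∑ l4, (v l1 * v l2 * v l3 * v l4)
            * (((if l1 = l2 then (1:ℝ) else 0)) * (if l3 = l4 then (1:ℝ) else 0)
              + (if q = r then (1:ℝ) else 0) * (if l1 = l3 then (1:ℝ) else 0)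
                * (if l2 = l4 then (1:ℝ) else 0)
              + (if q = r then (1:ℝ) else 0) * (if l1 = l4 then (1:ℝ) else 0)
                * (if l2 = l3 then (1:ℝ) else 0)) := by
      intro l1
      rw [integral_finset_sum _ (fun l2 _ => integrable_finset_sum _ fun l3 _ =>
        integrable_finset_sum _ fun l4 _ =>
        (wick4_integrable (l1, q) (l2, q) (l3, r) (l4, r)).const_mul _)]
      refine Finset.sum_congr rfl fun l2 _ => ?_
      rw [integral_finset_sum _ (fun l3 _ => integrable_finset_sum _ fun l4 _ =>
        (wick4_integrable (l1, q) (l2, q) (l3, r) (l4, r)).const_mul _)]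
      refine Finset.sum_congr rfl fun l3 _ => ?_
      rw [integral_finset_sum _ (fun l4 _ =>
        (wick4_integrable (l1, q) (l2, q) (l3, r) (l4, r)).const_mul _)]
      refine Finset.sum_congr rfl fun l4 _ => ?_
      rw [integral_const_mul, wick4]
      rw [ite_pair1, ite_pair1, ite_pair2, ite_pair2, ite_pair2, ite_pair2]
      by_cases hqr : q = r <;> simp [hqr] <;> ring
    rw [Finset.sum_congr rfl fun l1 _ => h1 l1]
    by_cases hqr : q = r
    · subst hqr
      simp only [eq_self_iff_true, if_true, one_mul, mul_add, Finset.sum_add_distrib]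
      have T1 : ∑ l1 : Fin k, ∑ l2 : Fin k, ∑ l3 : Fin k, ∑ l4 : Fin k,
          (v l1 * v l2 * v l3 * v l4) * ((if l1 = l2 then (1:ℝ) else 0)
            * (if l3 = l4 then (1:ℝ) else 0)) = s ^ 2 := by
        simp only [mul_ite, ite_mul, mul_one, mul_zero, zero_mul, one_mul,
          Finset.sum_ite_irrel, Finset.sum_ite_eq, Finset.sum_const_zero, Finset.mem_univ,
          if_true, Finset.sum_ite_eq']
        rw [hs, sq, Finset.sum_mul_sum]
        exact Finset.sum_congr rfl fun l1 _ => Finset.sum_congr rfl fun l3 _ => by ring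
      have T2 : ∑ l1 : Fin k, ∑ l2 : Fin k, ∑ l3 : Fin k, ∑ l4 : Fin k,
          (v l1 * v l2 * v l3 * v l4) * ((if l1 = l3 then (1:ℝ) else 0)
            * (if l2 = l4 then (1:ℝ) else 0)) = s ^ 2 := by
        simp only [mul_ite, ite_mul, mul_one, mul_zero, zero_mul, one_mul,
          Finset.sum_ite_irrel, Finset.sum_ite_eq, Finset.sum_const_zero, Finset.mem_univ,
          if_true, Finset.sum_ite_eq']
        rw [hs, sq, Finset.sum_mul_sum]
        exact Finset.sum_congr rfl fun l1 _ => Finset.sum_congr rfl fun l2 _ => by ring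
      have T3 : ∑ l1 : Fin k, ∑ l2 : Fin k, ∑ l3 : Fin k, ∑ l4 : Fin k,
          (v l1 * v l2 * v l3 * v l4) * ((if l1 = l4 then (1:ℝ) else 0)
            * (if l2 = l3 then (1:ℝ) else 0)) = s ^ 2 := by
        simp only [mul_ite, ite_mul, mul_one, mul_zero, zero_mul, one_mul,
          Finset.sum_ite_irrel, Finset.sum_ite_eq, Finset.sum_const_zero, Finset.mem_univ,
          if_true, Finset.sum_ite_eq']
        rw [hs, sq, Finset.sum_mul_sum]
        exact Finset.sum_congr rfl fun l1 _ => Finset.sum_congr rfl fun l2 _ => by ring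
      rw [show (∑ l1 : Fin k, ∑ l2 : Fin k, ∑ l3 : Fin k, ∑ l4 : Fin k,
          (v l1 * v l2 * v l3 * v l4) * ((if l1 = l2 then (1:ℝ) else 0)
            * (if l3 = l4 then (1:ℝ) else 0))) = s ^ 2 from T1,
        show (∑ l1 : Fin k, ∑ l2 : Fin k, ∑ l3 : Fin k, ∑ l4 : Fin k,
          (v l1 * v l2 * v l3 * v l4) * ((if l1 = l3 then (1:ℝ) else 0)
            * (if l2 = l4 then (1:ℝ) else 0))) = s ^ 2 from T2,
        show (∑ l1 : Fin k, ∑ l2 : Fin k, ∑ l3 : Fin k, ∑ l4 : Fin k,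
          (v l1 * v l2 * v l3 * v l4) * ((if l1 = l4 then (1:ℝ) else 0)
            * (if l2 = l3 then (1:ℝ) else 0))) = s ^ 2 from T3]
      ring
    · simp only [if_neg hqr, zero_mul, mul_zero, add_zero, mul_add, Finset.sum_add_distrib]
      have T1 : ∑ l1 : Fin k, ∑ l2 : Fin k, ∑ l3 : Fin k, ∑ l4 : Fin k,
          (v l1 * v l2 * v l3 * v l4) * ((if l1 = l2 then (1:ℝ) else 0)
            * (if l3 = l4 then (1:ℝ) else 0)) = s ^ 2 := by
        simp only [mul_ite, ite_mul, mul_one, mul_zero, zero_mul, one_mul,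
          Finset.sum_ite_irrel, Finset.sum_ite_eq, Finset.sum_const_zero, Finset.mem_univ,
          if_true, Finset.sum_ite_eq']
        rw [hs, sq, Finset.sum_mul_sum]
        exact Finset.sum_congr rfl fun l1 _ => Finset.sum_congr rfl fun l3 _ => by ring
      simpa using T1
  -- assemble
  haveI : IsProbabilityMeasure μ := by
    rw [hμdef]; infer_instance
  have IntX : Integrable (fun ω : (Fin k × Fin d) → ℝ =>
      ∑ c : Fin d, (∑ l : Fin k, v l * ω (l, c)) ^ 2) μ :=
    integrable_finset_sum _ fun c _ => IntZ2 c
  have IntX2 : Integrable (fun ω : (Fin k × Fin d) → ℝ =>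
      (∑ c : Fin d, (∑ l : Fin k, v l * ω (l, c)) ^ 2) ^ 2) μ := by
    have h : Integrable (fun ω : (Fin k × Fin d) → ℝ =>
        ∑ q : Fin d, ∑ r : Fin d,
          (∑ l : Fin k, v l * ω (l, q)) ^ 2 * (∑ l : Fin k, v l * ω (l, r)) ^ 2) μ :=
      integrable_finset_sum _ fun q _ => integrable_finset_sum _ fun r _ => IntZ4 q r
    have hfun : (fun ω : (Fin k × Fin d) → ℝ =>
        ∑ q : Fin d, ∑ r : Fin d,
          (∑ l : Fin k, v l * ω (l, q)) ^ 2 * (∑ l : Fin k, v l * ω (l, r)) ^ 2)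
        = (fun ω : (Fin k × Fin d) → ℝ =>
          (∑ c : Fin d, (∑ l : Fin k, v l * ω (l, c)) ^ 2) ^ 2) :=
      funext fun ω => by rw [sq, Finset.sum_mul_sum]
    exact hfun ▸ h
  have hIX : ∫ ω, (∑ c : Fin d, (∑ l : Fin k, v l * ω (l, c)) ^ 2) ∂μ = d * s := by
    rw [integral_finset_sum _ fun c _ => IntZ2 c]
    simp [E1, Finset.sum_const, Finset.card_univ, nsmul_eq_mul]
  have hIX2 : ∫ ω, (∑ c : Fin d, (∑ l : Fin k, v l * ω (l, c)) ^ 2) ^ 2 ∂μ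
      = d ^ 2 * s ^ 2 + d * (2 * s ^ 2) := by
    rw [integral_congr_ae (ae_of_all _ (fun ω : (Fin k × Fin d) → ℝ =>
      show (∑ c : Fin d, (∑ l : Fin k, v l * ω (l, c)) ^ 2) ^ 2
        = ∑ q : Fin d, ∑ r : Fin d,
          (∑ l : Fin k, v l * ω (l, q)) ^ 2 * (∑ l : Fin k, v l * ω (l, r)) ^ 2
        from by rw [sq, Finset.sum_mul_sum]))]
    rw [integral_finset_sum _ fun q _ => integrable_finset_sum _ fun r _ => IntZ4 q r]
    have : ∀ q : Fin d, ∫ ω, (∑ r : Fin d,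
        (∑ l : Fin k, v l * ω (l, q)) ^ 2 * (∑ l : Fin k, v l * ω (l, r)) ^ 2) ∂μ
        = ∑ r : Fin d, (s ^ 2 + (if q = r then 2 * s ^ 2 else 0)) := by
      intro q
      rw [integral_finset_sum _ fun r _ => IntZ4 q r]
      exact Finset.sum_congr rfl fun r _ => E2 q r
    rw [Finset.sum_congr rfl fun q _ => this q]
    simp [Finset.sum_add_distrib, Finset.sum_ite_eq, Finset.sum_const, Finset.card_univ,
      nsmul_eq_mul]
    ring
  rw [show (fun ω : (Fin k × Fin d) → ℝ =>
      ((∑ c : Fin d, (∑ l : Fin k, v l * ω (l, c)) ^ 2) - (d : ℝ) * s) ^ 2)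
    = (fun ω : (Fin k × Fin d) → ℝ =>
      (∑ c : Fin d, (∑ l : Fin k, v l * ω (l, c)) ^ 2) ^ 2
        - (2 * ((d : ℝ) * s)) * (∑ c : Fin d, (∑ l : Fin k, v l * ω (l, c)) ^ 2)
        + ((d : ℝ) * s) ^ 2) from funext fun ω => by ring]
  have hA : Integrable (fun ω : (Fin k × Fin d) → ℝ =>
      (∑ c : Fin d, (∑ l : Fin k, v l * ω (l, c)) ^ 2) ^ 2
        - (2 * ((d : ℝ) * s)) * (∑ c : Fin d, (∑ l : Fin k, v l * ω (l, c)) ^ 2)) μ :=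
    IntX2.sub (IntX.const_mul _)
  have hB : Integrable (fun ω : (Fin k × Fin d) → ℝ =>
      (2 * ((d : ℝ) * s)) * (∑ c : Fin d, (∑ l : Fin k, v l * ω (l, c)) ^ 2)) μ :=
    IntX.const_mul _
  rw [integral_add hA (integrable_const _), integral_sub IntX2 hB, integral_const_mul,
    integral_const]
  rw [hIX, hIX2]
  simp [measure_univ]
  ring

/-- The variance of the squared distance `d²ᵢⱼ(ω) = ∑ c, (Y i c ω - Y j c ω)²`
under the i.i.d. standard Gaussian product measure equals `2 * d * k̃ᵢⱼ²`, where
`k̃ᵢⱼ = K i i + K j j - 2 * K i j` and `K = A * Aᵀ`. -/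
theorem variance_squared_distance
    (n k d : ℕ) (hn : 0 < n) (hk : 0 < k) (hd : 0 < d)
    (A : Matrix (Fin n) (Fin k) ℝ)
    (μ : Measure ((Fin k × Fin d) → ℝ))
    (hμ : μ = Measure.pi (fun _ : Fin k × Fin d => gaussianReal 0 1))
    (K : Matrix (Fin n) (Fin n) ℝ) (hK : K = A * Aᵀ)
    (Y : Fin n → Fin d → ((Fin k × Fin d) → ℝ) → ℝ)
    (hY : ∀ i c ω, Y i c ω = ∑ l, A i l * ω (l, c))
    (i j : Fin n) (ktil : ℝ) (hktil : ktil = K i i + K j j - 2 * K i j) :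
    ∫ ω, ((∑ c, (Y i c ω - Y j c ω) ^ 2) - (d : ℝ) * ktil) ^ 2 ∂μ
      = 2 * (d : ℝ) * ktil ^ 2 := by
  subst hμ
  have hv : ktil = ∑ l : Fin k, (A i l - A j l) ^ 2 := by
    rw [hktil, hK]
    simp only [Matrix.mul_apply, Matrix.transpose_apply]
    rw [Finset.mul_sum, ← Finset.sum_add_distrib, ← Finset.sum_sub_distrib]
    exact Finset.sum_congr rfl fun l _ => by ring
  have hcong : ∀ ω : (Fin k × Fin d) → ℝ,
      (∑ c : Fin d, (Y i c ω - Y j c ω) ^ 2)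
        = ∑ c : Fin d, (∑ l : Fin k, (A i l - A j l) * ω (l, c)) ^ 2 := by
    intro ω
    refine Finset.sum_congr rfl fun c _ => ?_
    rw [hY, hY, ← Finset.sum_sub_distrib]
    congr 1
    exact Finset.sum_congr rfl fun l _ => by ring
  have hmain := main_calc k d (fun l => A i l - A j l)
  rw [hv, ← hmain]
  exact integral_congr_ae (ae_of_all _ fun ω => by beta_reduce; rw [hcong ω])
end

section
/- Let n be a positive natural, A : Fin n → Fin n → ℝ with A_{ij} ∈ {0, 1} for all i, j, let d : Fin n → Fin n → ℝ with d_{ij} > 0 for all i, j, and let ε ∈ (0, 1). Then the CNE energy is bounded above by the Bernoulli log-likelihood up to an additive constant: Σ_{ij} A_{ij} log(1/(1 + d_{ij}²)) + ε Σ_{ij} (1 − A_{ij}) log(1 − 1/(1 + d_{ij}²)) ≤ Σ_{ij} A_{ij} log(ε/(1 + d_{ij}²)) + Σ_{ij} (1 − A_{ij}) log(1 − ε/(1 + d_{ij}²)) − (Σ_{ij} A_{ij}) · log ε. -/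
open Finset

/-!
Concavity of `log` gives `ε log (1 - p) ≤ log (1 - ε p)` for `ε ∈ [0, 1]`, which bounds each
non-edge term of the CNE energy by the corresponding Bernoulli term, while on the edges
`log (ε / x) = log (1 / x) + log ε`, so the two edge sums differ exactly by `(∑ Aᵢⱼ) log ε`.
-/

namespace Real

theorem mul_log_one_sub_le_log_one_sub_mul {ε p : ℝ} (hε0 : 0 ≤ ε) (hε1 : ε ≤ 1) (hp : p < 1) :
    ε * log (1 - p) ≤ log (1 - ε * p) := by
  have hconc := strictConcaveOn_log_Ioi.concaveOn.2 (Set.mem_Ioi.2 (sub_pos.2 hp))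
    (Set.mem_Ioi.2 one_pos) hε0 (sub_nonneg.2 hε1) (add_sub_cancel ε 1)
  simp only [smul_eq_mul, mul_one, log_one, mul_zero, add_zero] at hconc
  calc ε * log (1 - p) ≤ log (ε * (1 - p) + (1 - ε)) := hconc
    _ = log (1 - ε * p) := by ring_nf

theorem one_div_one_add_sq_lt_one {d : ℝ} (hd : d ≠ 0) : 1 / (1 + d ^ 2) < 1 :=
  (div_lt_one (by positivity)).2 (lt_add_of_pos_right 1 (by positivity))

end Real

section WeightedLogSums

variable {ι κ : Type*} [Fintype ι] [Fintype κ]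

theorem sum_sum_mul_log_div_eq (A x : ι → κ → ℝ) {ε : ℝ} (hε : ε ≠ 0)
    (hx : ∀ i j, x i j ≠ 0) :
    ∑ i, ∑ j, A i j * Real.log (ε / x i j)
      = ∑ i, ∑ j, A i j * Real.log (1 / x i j) + (∑ i, ∑ j, A i j) * Real.log ε := by
  simp only [sum_mul, ← sum_add_distrib]
  refine sum_congr rfl fun i _ => sum_congr rfl fun j _ => ?_
  rw [Real.log_div hε (hx i j), Real.log_div one_ne_zero (hx i j), Real.log_one]
  ring

theorem mul_sum_sum_mul_log_one_sub_le {w p : ι → κ → ℝ} {ε : ℝ} (hε0 : 0 ≤ ε) (hε1 : ε ≤ 1)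
    (hw : ∀ i j, 0 ≤ w i j) (hp : ∀ i j, p i j < 1) :
    ε * ∑ i, ∑ j, w i j * Real.log (1 - p i j)
      ≤ ∑ i, ∑ j, w i j * Real.log (1 - ε * p i j) := by
  simp only [mul_sum]
  refine sum_le_sum fun i _ => sum_le_sum fun j _ => ?_
  rw [mul_left_comm]
  exact mul_le_mul_of_nonneg_left
    (Real.mul_log_one_sub_le_log_one_sub_mul hε0 hε1 (hp i j)) (hw i j)

end WeightedLogSums

theorem cne_energy_le_bernoulli_loglik_general
    (n : ℕ)
    (A : Fin n → Fin n → ℝ) (hA : ∀ i j, A i j = 0 ∨ A i j = 1)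
    (d : Fin n → Fin n → ℝ) (hd : ∀ i j, 0 < d i j)
    (ε : ℝ) (hε0 : 0 < ε) (hε1 : ε < 1) :
    (∑ i, ∑ j, A i j * Real.log (1 / (1 + d i j ^ 2)))
        + ε * ∑ i, ∑ j, (1 - A i j) * Real.log (1 - 1 / (1 + d i j ^ 2))
      ≤ (∑ i, ∑ j, A i j * Real.log (ε / (1 + d i j ^ 2)))
          + (∑ i, ∑ j, (1 - A i j) * Real.log (1 - ε / (1 + d i j ^ 2)))
          - (∑ i, ∑ j, A i j) * Real.log ε := by
  have hweight : ∀ i j, 0 ≤ 1 - A i j := fun i j => by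
    rcases hA i j with h | h <;> simp [h]
  have hnonedges := mul_sum_sum_mul_log_one_sub_le hε0.le hε1.le hweight
    fun i j => Real.one_div_one_add_sq_lt_one (hd i j).ne'
  simp only [mul_one_div] at hnonedges
  rw [sum_sum_mul_log_div_eq A _ hε0.ne' fun i j => by positivity]
  linarith

/-- The CNE energy is bounded above by the Bernoulli log-likelihood up to an additive
constant: for a 0/1 adjacency matrix `A`, positive distances `d`, and `ε ∈ (0, 1)`,
`∑ᵢⱼ Aᵢⱼ log (1/(1+dᵢⱼ²)) + ε ∑ᵢⱼ (1-Aᵢⱼ) log (1 - 1/(1+dᵢⱼ²))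
  ≤ ∑ᵢⱼ Aᵢⱼ log (ε/(1+dᵢⱼ²)) + ∑ᵢⱼ (1-Aᵢⱼ) log (1 - ε/(1+dᵢⱼ²)) - (∑ᵢⱼ Aᵢⱼ) log ε`. -/
theorem cne_energy_le_bernoulli_loglik
    (n : ℕ) (hn : 0 < n)
    (A : Fin n → Fin n → ℝ) (hA : ∀ i j, A i j = 0 ∨ A i j = 1)
    (d : Fin n → Fin n → ℝ) (hd : ∀ i j, 0 < d i j)
    (ε : ℝ) (hε0 : 0 < ε) (hε1 : ε < 1) :
    (∑ i, ∑ j, A i j * Real.log (1 / (1 + d i j ^ 2)))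
        + ε * ∑ i, ∑ j, (1 - A i j) * Real.log (1 - 1 / (1 + d i j ^ 2))
      ≤ (∑ i, ∑ j, A i j * Real.log (ε / (1 + d i j ^ 2)))
          + (∑ i, ∑ j, (1 - A i j) * Real.log (1 - ε / (1 + d i j ^ 2)))
          - (∑ i, ∑ j, A i j) * Real.log ε :=
  cne_energy_le_bernoulli_loglik_general n A hA d hd ε hε0 hε1
end

section
/- For any points x_1, …, x_n ∈ ℝ^q, the n×n matrix P with entries P_{ij} = 1/(1 + ‖x_i − x_j‖²) is positive semidefinite. -/
open MeasureTheory Set Finset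

-- Lemma A: quadratic form of entrywise powers of a Gram matrix is nonneg
lemma inner_pow_quadform_nonneg {n q : ℕ} (x : Fin n → EuclideanSpace ℝ (Fin q))
    (c : Fin n → ℝ) (k : ℕ) :
    0 ≤ ∑ i, ∑ j, c i * c j * (inner ℝ (x i) (x j) : ℝ) ^ k := by
  have hinner : ∀ i j, (inner ℝ (x i) (x j) : ℝ) = ∑ a, x i a * x j a := by
    intro i j
    simp [PiLp.inner_apply, RCLike.inner_apply, mul_comm]
  set S := Fintype.piFinset (fun _ : Fin k => (univ : Finset (Fin q))) with hS
  have e1 : ∀ i j : Fin n, c i * c j * (inner ℝ (x i) (x j) : ℝ) ^ k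
      = ∑ f ∈ S, (c i * ∏ m, x i (f m)) * (c j * ∏ m, x j (f m)) := by
    intro i j
    rw [hinner,
      show (∑ a, x i a * x j a) ^ k = ∏ m : Fin k, ∑ a, x i a * x j a by
        rw [Finset.prod_const, Finset.card_univ, Fintype.card_fin],
      Finset.prod_univ_sum, Finset.mul_sum]
    exact Finset.sum_congr rfl fun f _ => by rw [Finset.prod_mul_distrib]; ring
  have step1 : ∑ i, ∑ j, c i * c j * (inner ℝ (x i) (x j) : ℝ) ^ k
      = ∑ f ∈ S, ∑ i, ∑ j, (c i * ∏ m, x i (f m)) * (c j * ∏ m, x j (f m)) :=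
    calc ∑ i, ∑ j, c i * c j * (inner ℝ (x i) (x j) : ℝ) ^ k
        = ∑ i, ∑ j, ∑ f ∈ S, (c i * ∏ m, x i (f m)) * (c j * ∏ m, x j (f m)) := by
          exact Finset.sum_congr rfl fun i _ => Finset.sum_congr rfl fun j _ => e1 i j
      _ = ∑ i, ∑ f ∈ S, ∑ j, (c i * ∏ m, x i (f m)) * (c j * ∏ m, x j (f m)) :=
          Finset.sum_congr rfl fun i _ => Finset.sum_comm
      _ = ∑ f ∈ S, ∑ i, ∑ j, (c i * ∏ m, x i (f m)) * (c j * ∏ m, x j (f m)) :=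
          Finset.sum_comm
  rw [step1]
  refine Finset.sum_nonneg fun f _ => ?_
  rw [← Finset.sum_mul_sum]
  exact mul_self_nonneg _

lemma gauss_quadform_nonneg {n q : ℕ} (x : Fin n → EuclideanSpace ℝ (Fin q))
    (c : Fin n → ℝ) {t : ℝ} (ht : 0 ≤ t) :
    0 ≤ ∑ i, ∑ j, c i * c j * Real.exp (-(t * ‖x i - x j‖ ^ 2)) := by
  set w : Fin n → ℝ := fun i => c i * Real.exp (-(t * ‖x i‖ ^ 2)) with hw
  have key : ∀ i j : Fin n, c i * c j * Real.exp (-(t * ‖x i - x j‖ ^ 2))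
      = w i * w j * Real.exp (2 * t * (inner ℝ (x i) (x j) : ℝ)) := by
    intro i j
    rw [hw]
    simp only []
    rw [show -(t * ‖x i - x j‖ ^ 2)
        = -(t * ‖x i‖ ^ 2) + -(t * ‖x j‖ ^ 2) + 2 * t * (inner ℝ (x i) (x j) : ℝ) by
      rw [@norm_sub_sq_real]; ring]
    rw [Real.exp_add, Real.exp_add]
    ring
  simp_rw [key]
  have hexp : ∀ y : ℝ, Real.exp y = ∑' k : ℕ, y ^ k / (Nat.factorial k : ℝ) := by
    intro y
    rw [Real.exp_eq_exp_ℝ, NormedSpace.exp_eq_tsum_div]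
  rw [← Finset.sum_product']
  have hsummable : ∀ p : Fin n × Fin n,
      Summable (fun k : ℕ => w p.1 * w p.2 *
        ((2 * t * (inner ℝ (x p.1) (x p.2) : ℝ)) ^ k / (Nat.factorial k : ℝ))) := fun p =>
    (Real.summable_pow_div_factorial _).mul_left _
  have expand : ∀ p : Fin n × Fin n,
      w p.1 * w p.2 * Real.exp (2 * t * (inner ℝ (x p.1) (x p.2) : ℝ))
      = ∑' k : ℕ, w p.1 * w p.2 *
          ((2 * t * (inner ℝ (x p.1) (x p.2) : ℝ)) ^ k / (Nat.factorial k : ℝ)) := by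
    intro p
    rw [hexp, ← tsum_mul_left]
  simp_rw [expand]
  rw [← Summable.tsum_finsetSum (fun p _ => hsummable p)]
  refine tsum_nonneg fun k => ?_
  have : ∑ p ∈ Finset.univ ×ˢ Finset.univ, w p.1 * w p.2 *
        ((2 * t * (inner ℝ (x p.1) (x p.2) : ℝ)) ^ k / (Nat.factorial k : ℝ))
      = ((2 * t) ^ k / (Nat.factorial k : ℝ)) * ∑ i, ∑ j, w i * w j * (inner ℝ (x i) (x j) : ℝ) ^ k := by
    simp_rw [Finset.mul_sum]
    rw [← Finset.sum_product']
    exact Finset.sum_congr rfl fun p _ => by rw [mul_pow]; ring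
  rw [this]
  exact mul_nonneg (div_nonneg (pow_nonneg (by linarith) k) (Nat.cast_nonneg _))
    (inner_pow_quadform_nonneg x w k)

lemma one_div_eq_integral_exp {b : ℝ} (hb : 0 < b) :
    1 / b = ∫ t in Ioi (0 : ℝ), Real.exp (-(b * t)) := by
  have h := integral_comp_mul_left_Ioi (fun u => Real.exp (-u)) 0 hb
  simp only [mul_zero, integral_exp_neg_Ioi, neg_zero, Real.exp_zero, smul_eq_mul,
    mul_one] at h
  rw [h, one_div]

/-- The Student-t/Cauchy kernel matrix `P` with entries `Pᵢⱼ = 1 / (1 + ‖xᵢ - xⱼ‖²)`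
evaluated at any points `x₁, …, xₙ ∈ ℝ^q` is positive semidefinite. -/
theorem cauchy_kernel_posSemidef
    (n q : ℕ) (x : Fin n → EuclideanSpace ℝ (Fin q)) :
    (Matrix.of fun i j : Fin n => 1 / (1 + ‖x i - x j‖ ^ 2)).PosSemidef := by
  constructor
  · show _ = _
    ext i j
    simp [Matrix.conjTranspose_apply, norm_sub_rev]
  intro v
  simp only [star_trivial, dotProduct, Matrix.mulVec, Matrix.of_apply,
    Pi.natCast_def]
  have hform : ∀ i : Fin n, v i * (dotProduct (fun j => 1 / (1 + ‖x i - x j‖ ^ 2)) v)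
      = ∑ j, v i * v j * (1 / (1 + ‖x i - x j‖ ^ 2)) := by
    intro i
    rw [dotProduct, Finset.mul_sum]
    exact Finset.sum_congr rfl fun j _ => by ring
  calc 0 ≤ ∑ i, ∑ j, v i * v j * (1 / (1 + ‖x i - x j‖ ^ 2)) := ?_
    _ = ∑ i, v i * dotProduct (fun j => 1 / (1 + ‖x i - x j‖ ^ 2)) v :=
      (Finset.sum_congr rfl fun i _ => (hform i).symm)
  set b : Fin n → Fin n → ℝ := fun i j => 1 + ‖x i - x j‖ ^ 2 with hbdef
  have hb : ∀ i j, 0 < b i j := fun i j => by positivity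
  have hP : ∀ i j : Fin n, v i * v j * (1 / b i j)
      = ∫ t in Ioi (0 : ℝ), v i * v j * Real.exp (-(b i j * t)) := by
    intro i j
    rw [one_div_eq_integral_exp (hb i j), ← integral_const_mul]
  show 0 ≤ ∑ i, ∑ j, v i * v j * (1 / b i j)
  simp_rw [hP]
  rw [← Finset.sum_product']
  have hint : ∀ p : Fin n × Fin n,
      IntegrableOn (fun t => v p.1 * v p.2 * Real.exp (-(b p.1 p.2 * t))) (Ioi (0:ℝ)) := by
    intro p
    have := (exp_neg_integrableOn_Ioi 0 (hb p.1 p.2)).const_mul (v p.1 * v p.2)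
    simpa [neg_mul, mul_assoc, IntegrableOn] using this
  rw [← integral_finset_sum _ (fun p _ => hint p)]
  refine setIntegral_nonneg measurableSet_Ioi fun t htt => ?_
  have hsplit : ∀ i j : Fin n, v i * v j * Real.exp (-(b i j * t))
      = Real.exp (-t) * (v i * v j * Real.exp (-(t * ‖x i - x j‖ ^ 2))) := by
    intro i j
    rw [hbdef]
    simp only []
    rw [show -((1 + ‖x i - x j‖ ^ 2) * t) = -t + -(t * ‖x i - x j‖ ^ 2) by ring,
      Real.exp_add]
    ring
  have h0 : 0 ≤ ∑ i, ∑ j, v i * v j * Real.exp (-(b i j * t)) := by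
    simp_rw [hsplit, ← Finset.mul_sum]
    exact mul_nonneg (Real.exp_nonneg _) (gauss_quadform_nonneg x v (le_of_lt htt))
  rw [← Finset.sum_product'] at h0
  exact h0
  apply le_of_eq
  rw [Finsupp.sum_fintype _ _ (by simp)]
  refine Finset.sum_congr rfl fun i _ => ?_
  rw [Finsupp.sum_fintype _ _ (by simp), dotProduct, Finset.mul_sum]
  exact Finset.sum_congr rfl fun j _ => by ring
end

section
/- For any points x_1, …, x_n ∈ ℝ^q and any real t > 0, the n×n matrix with entries (1 + ‖x_i − x_j‖²)^{−t} is positive semidefinite. (Elementwise fractional powers of the Cauchy kernel matrix remain positive semidefinite, i.e., the Cauchy kernel is infinitely divisible.) -/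
open Real MeasureTheory Finset Set Matrix

/-- The quadratic form of integral powers of the Gram (inner product) kernel is nonneg. -/
lemma power_kernel_nonneg {n q : ℕ} (y : Fin n → EuclideanSpace ℝ (Fin q)) (k : ℕ)
    (w : Fin n → ℝ) :
    0 ≤ ∑ i, ∑ j, w i * w j * (inner ℝ (y i) (y j) : ℝ) ^ k := by
  have hinner : ∀ i j : Fin n, (inner ℝ (y i) (y j) : ℝ) = ∑ r, y i r * y j r := by
    intro i j
    simp [PiLp.inner_apply, RCLike.inner_apply, mul_comm]
  set A : Finset (Fin k → Fin q) := Fintype.piFinset (fun _ => (Finset.univ : Finset (Fin q)))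
    with hA
  set P : (Fin k → Fin q) → Fin n → ℝ := fun a i => ∏ m, y i (a m) with hP
  have hpow : ∀ i j : Fin n, (inner ℝ (y i) (y j) : ℝ) ^ k = ∑ a ∈ A, P a i * P a j := by
    intro i j
    rw [hinner]
    have h1 : (∑ r, y i r * y j r) ^ k = ∏ _m : Fin k, (∑ r, y i r * y j r) := by
      simp
    rw [h1, Finset.prod_univ_sum]
    refine Finset.sum_congr rfl fun a _ => ?_
    simp [hP, Finset.prod_mul_distrib]
  have key : ∑ a ∈ A, (∑ i, w i * P a i) ^ 2
      = ∑ i, ∑ j, w i * w j * (inner ℝ (y i) (y j) : ℝ) ^ k := by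
    have h2 : ∀ a ∈ A, (∑ i, w i * P a i) ^ 2
        = ∑ i, ∑ j, w i * P a i * (w j * P a j) := by
      intro a _
      rw [sq, Finset.sum_mul_sum]
    rw [Finset.sum_congr rfl h2, Finset.sum_comm]
    refine Finset.sum_congr rfl fun i _ => ?_
    rw [Finset.sum_comm]
    refine Finset.sum_congr rfl fun j _ => ?_
    rw [hpow i j, Finset.mul_sum]
    exact Finset.sum_congr rfl fun a _ => by ring
  rw [← key]
  exact Finset.sum_nonneg fun a _ => sq_nonneg _

/-- The Gaussian kernel quadratic form is nonnegative. -/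
lemma gaussian_kernel_nonneg {n q : ℕ} (x : Fin n → EuclideanSpace ℝ (Fin q))
    {u : ℝ} (hu : 0 ≤ u) (v : Fin n → ℝ) :
    0 ≤ ∑ i, ∑ j, v i * v j * Real.exp (-(u * ‖x i - x j‖ ^ 2)) := by
  set c : Fin n → ℝ := fun i => v i * Real.exp (-(u * ‖x i‖ ^ 2)) with hc
  have hstep : ∀ i j : Fin n, v i * v j * Real.exp (-(u * ‖x i - x j‖ ^ 2))
      = c i * c j * Real.exp (2 * u * (inner ℝ (x i) (x j) : ℝ)) := by
    intro i j
    have hns : -(u * ‖x i - x j‖ ^ 2)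
        = (-(u * ‖x i‖ ^ 2) + -(u * ‖x j‖ ^ 2)) + 2 * u * (inner ℝ (x i) (x j) : ℝ) := by
      have h0 : ‖x i - x j‖ ^ 2
          = ‖x i‖ ^ 2 - 2 * (inner ℝ (x i) (x j) : ℝ) + ‖x j‖ ^ 2 := by
        exact norm_sub_sq_real _ _
      rw [h0]; ring
    rw [hc, hns, Real.exp_add, Real.exp_add]
    ring
  have hexp : ∀ i j : Fin n, Real.exp (2 * u * (inner ℝ (x i) (x j) : ℝ))
      = ∑' m : ℕ, (2 * u * (inner ℝ (x i) (x j) : ℝ)) ^ m / (Nat.factorial m : ℝ) := by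
    intro i j
    rw [Real.exp_eq_exp_ℝ, NormedSpace.exp_eq_tsum_div]
  have hsum : ∀ i j : Fin n, Summable (fun m : ℕ =>
      c i * c j * ((2 * u * (inner ℝ (x i) (x j) : ℝ)) ^ m / (Nat.factorial m : ℝ))) :=
    fun i j => (Real.summable_pow_div_factorial _).mul_left _
  calc (0:ℝ) ≤ ∑' m : ℕ, ∑ p : Fin n × Fin n,
        c p.1 * c p.2 * ((2 * u * (inner ℝ (x p.1) (x p.2) : ℝ)) ^ m / (Nat.factorial m : ℝ)) := by
        refine tsum_nonneg fun m => ?_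
        have heq : ∑ p : Fin n × Fin n,
            c p.1 * c p.2 * ((2 * u * (inner ℝ (x p.1) (x p.2) : ℝ)) ^ m / (Nat.factorial m : ℝ))
            = ((2*u) ^ m / (Nat.factorial m : ℝ)) *
              ∑ i, ∑ j, c i * c j * (inner ℝ (x i) (x j) : ℝ) ^ m := by
          rw [Fintype.sum_prod_type, Finset.mul_sum]
          refine Finset.sum_congr rfl fun i _ => ?_
          rw [Finset.mul_sum]
          refine Finset.sum_congr rfl fun j _ => ?_
          rw [mul_pow]
          ring
        rw [heq]
        have h1 : (0:ℝ) ≤ (2*u) ^ m / (Nat.factorial m : ℝ) := by positivity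
        exact mul_nonneg h1 (power_kernel_nonneg x m c)
    _ = ∑ p : Fin n × Fin n, ∑' m : ℕ,
        c p.1 * c p.2 * ((2 * u * (inner ℝ (x p.1) (x p.2) : ℝ)) ^ m / (Nat.factorial m : ℝ)) :=
        Summable.tsum_finsetSum (fun p _ => hsum p.1 p.2)
    _ = ∑ i, ∑ j, v i * v j * Real.exp (-(u * ‖x i - x j‖ ^ 2)) := by
        rw [Fintype.sum_prod_type]
        refine Finset.sum_congr rfl fun i _ => Finset.sum_congr rfl fun j _ => ?_
        rw [tsum_mul_left, ← hexp i j, ← hstep i j]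

lemma integrableOn_rpow_exp {t : ℝ} (ht : 0 < t) {r : ℝ} (hr : 0 < r) :
    IntegrableOn (fun u : ℝ => u ^ (t - 1) * Real.exp (-(r * u))) (Ioi 0) := by
  have h := Real.GammaIntegral_convergent ht
  have h2 : IntegrableOn (fun u : ℝ => Real.exp (-(r * u)) * (r * u) ^ (t - 1)) (Ioi 0) := by
    have := (integrableOn_Ioi_comp_mul_left_iff
      (fun x : ℝ => Real.exp (-x) * x ^ (t - 1)) 0 hr).2 (by simpa using h)
    simpa using this
  have h3 : IntegrableOn
      (fun u : ℝ => ((r : ℝ) ^ (t - 1))⁻¹ * (Real.exp (-(r * u)) * (r * u) ^ (t - 1)))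
      (Ioi 0) := h2.const_mul _
  refine h3.congr_fun ?_ measurableSet_Ioi
  intro u hu
  simp only
  have hu0 : (0:ℝ) < u := hu
  have hmul : (r * u) ^ (t - 1) = r ^ (t - 1) * u ^ (t - 1) :=
    Real.mul_rpow hr.le hu0.le
  have hrp : (0:ℝ) < r ^ (t - 1) := Real.rpow_pos_of_pos hr _
  rw [hmul]
  field_simp

/-- For any points `x₁, …, xₙ ∈ ℝ^q` and any real `t > 0`, the matrix with entries
`(1 + ‖xᵢ - xⱼ‖²)^(-t)` is positive semidefinite: elementwise fractional powers of
the Cauchy kernel matrix remain positive semidefinite. -/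
theorem cauchy_kernel_rpow_posSemidef
    (n q : ℕ) (x : Fin n → EuclideanSpace ℝ (Fin q)) (t : ℝ) (ht : 0 < t) :
    (Matrix.of fun i j : Fin n => (1 + ‖x i - x j‖ ^ 2) ^ (-t)).PosSemidef := by
  refine Matrix.posSemidef_iff_dotProduct_mulVec.mpr ⟨?_, ?_⟩
  · ext i j
    simp [Matrix.conjTranspose_apply, norm_sub_rev]
  intro v
  have hGamma : (0:ℝ) < Real.Gamma t := Real.Gamma_pos_of_pos ht
  -- entrywise integral representation
  have hentry : ∀ i j : Fin n, (1 + ‖x i - x j‖ ^ 2) ^ (-t)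
      = (Real.Gamma t)⁻¹ * ∫ u in Ioi (0:ℝ),
        u ^ (t - 1) * Real.exp (-((1 + ‖x i - x j‖ ^ 2) * u)) := by
    intro i j
    have hr : (0:ℝ) < 1 + ‖x i - x j‖ ^ 2 := by positivity
    rw [Real.integral_rpow_mul_exp_neg_mul_Ioi ht hr]
    rw [one_div, Real.inv_rpow hr.le, ← Real.rpow_neg hr.le]
    field_simp
  -- the quadratic form
  have hq : star v ⬝ᵥ ((Matrix.of fun i j : Fin n => (1 + ‖x i - x j‖ ^ 2) ^ (-t)) *ᵥ v)
      = ∑ p : Fin n × Fin n, v p.1 * v p.2 * (1 + ‖x p.1 - x p.2‖ ^ 2) ^ (-t) := by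
    simp only [dotProduct, Matrix.mulVec, star_trivial, Fintype.sum_prod_type,
      Matrix.of_apply]
    refine Finset.sum_congr rfl fun i _ => ?_
    rw [Finset.mul_sum]
    exact Finset.sum_congr rfl fun j _ => by ring
  rw [hq]
  set F : Fin n × Fin n → ℝ → ℝ := fun p u =>
    v p.1 * v p.2 * (u ^ (t - 1) * Real.exp (-((1 + ‖x p.1 - x p.2‖ ^ 2) * u))) with hF
  have hint : ∀ p : Fin n × Fin n, IntegrableOn (F p) (Ioi 0) := by
    intro p
    have hr : (0:ℝ) < 1 + ‖x p.1 - x p.2‖ ^ 2 := by positivity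
    exact (integrableOn_rpow_exp ht hr).const_mul _
  have hswap : ∑ p : Fin n × Fin n, v p.1 * v p.2 * (1 + ‖x p.1 - x p.2‖ ^ 2) ^ (-t)
      = (Real.Gamma t)⁻¹ * ∫ u in Ioi (0:ℝ), ∑ p : Fin n × Fin n, F p u := by
    rw [integral_finset_sum _ fun p _ => hint p, Finset.mul_sum]
    refine Finset.sum_congr rfl fun p _ => ?_
    rw [hentry p.1 p.2]
    simp only [hF]
    rw [MeasureTheory.integral_const_mul]
    ring
  rw [hswap]
  refine mul_nonneg (inv_nonneg.2 hGamma.le) ?_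
  refine setIntegral_nonneg measurableSet_Ioi fun u hu => ?_
  have hu0 : (0:ℝ) < u := hu
  have hFval : ∑ p : Fin n × Fin n, F p u
      = (u ^ (t - 1) * Real.exp (-u)) *
        ∑ i, ∑ j, v i * v j * Real.exp (-(u * ‖x i - x j‖ ^ 2)) := by
    rw [Fintype.sum_prod_type, Finset.mul_sum]
    refine Finset.sum_congr rfl fun i _ => ?_
    rw [Finset.mul_sum]
    refine Finset.sum_congr rfl fun j _ => ?_
    simp only [hF]
    have hsplit : Real.exp (-((1 + ‖x i - x j‖ ^ 2) * u))
        = Real.exp (-u) * Real.exp (-(u * ‖x i - x j‖ ^ 2)) := by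
      rw [← Real.exp_add]; ring_nf
    rw [hsplit]
    ring
  rw [hFval]
  exact mul_nonneg (mul_nonneg (Real.rpow_nonneg hu0.le _) (Real.exp_nonneg _))
    (gaussian_kernel_nonneg x hu0.le v)
end

section
/- For any points x_1, …, x_n ∈ ℝ^q and any real vector v ∈ ℝ^n with Σ_i v_i = 0, it holds that Σ_{ij} v_i v_j log(1 + ‖x_i − x_j‖²) ≤ 0. (The matrix with entries log P_{ij} = −log(1 + ‖x_i − x_j‖²), the elementwise logarithm of the Cauchy kernel matrix, is conditionally positive semidefinite.) -/
set_option maxHeartbeats 1000000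

open Real MeasureTheory Set

/-- Key algebraic fact: sums of powers of dot products are PSD. -/
lemma aux_inner_pow_psd {n q : ℕ} (k : ℕ) (w : Fin n → ℝ) (y : Fin n → Fin q → ℝ) :
    0 ≤ ∑ i, ∑ j, w i * w j * (∑ a, y i a * y j a) ^ k := by
  have key : ∀ i j : Fin n, (∑ a, y i a * y j a) ^ k
      = ∑ g : Fin k → Fin q, ∏ l, (y i (g l) * y j (g l)) := by
    intro i j
    rw [show ((∑ a, y i a * y j a) ^ k) = ∏ _l : Fin k, (∑ a, y i a * y j a) by simp,
      Finset.prod_univ_sum]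
    simp
  have expand : ∀ g : Fin k → Fin q,
      (∑ i, w i * ∏ l, y i (g l)) ^ 2
        = ∑ i, ∑ j, w i * w j * ∏ l, (y i (g l) * y j (g l)) := by
    intro g
    rw [sq, Finset.sum_mul_sum]
    refine Finset.sum_congr rfl fun i _ => Finset.sum_congr rfl fun j _ => ?_
    rw [Finset.prod_mul_distrib]; ring
  have main : ∑ i, ∑ j, w i * w j * (∑ a, y i a * y j a) ^ k
      = ∑ g : Fin k → Fin q, (∑ i, w i * ∏ l, y i (g l)) ^ 2 := by
    simp_rw [expand, key, Finset.mul_sum]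
    exact (Finset.sum_congr rfl fun i _ => Finset.sum_comm).trans Finset.sum_comm
  rw [main]
  exact Finset.sum_nonneg fun g _ => sq_nonneg _

/-- The Gaussian kernel is positive semidefinite. -/
lemma aux_gaussian_psd {n q : ℕ} (x : Fin n → EuclideanSpace ℝ (Fin q)) (v : Fin n → ℝ)
    {μ : ℝ} (hμ : 0 ≤ μ) :
    0 ≤ ∑ i, ∑ j, v i * v j * Real.exp (-(μ * ‖x i - x j‖ ^ 2)) := by
  classical
  set w : Fin n → ℝ := fun i => v i * Real.exp (-(μ * ‖x i‖ ^ 2)) with hw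
  set t : Fin n → Fin n → ℝ := fun i j => 2 * μ * (inner ℝ (x i) (x j) : ℝ) with ht
  have hterm : ∀ i j : Fin n, v i * v j * Real.exp (-(μ * ‖x i - x j‖ ^ 2))
      = w i * w j * Real.exp (t i j) := by
    intro i j
    have hn : ‖x i - x j‖ ^ 2 = ‖x i‖ ^ 2 - 2 * (inner ℝ (x i) (x j) : ℝ) + ‖x j‖ ^ 2 :=
      norm_sub_sq_real _ _
    rw [hw, ht, hn]
    rw [show -(μ * (‖x i‖ ^ 2 - 2 * (inner ℝ (x i) (x j) : ℝ) + ‖x j‖ ^ 2))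
        = -(μ * ‖x i‖ ^ 2) + (-(μ * ‖x j‖ ^ 2) + 2 * μ * (inner ℝ (x i) (x j) : ℝ)) by ring,
      Real.exp_add, Real.exp_add]
    ring
  have hexp : ∀ i j : Fin n, w i * w j * Real.exp (t i j)
      = ∑' k : ℕ, w i * w j * (t i j ^ k / (k.factorial : ℝ)) := by
    intro i j
    rw [Real.exp_eq_exp_ℝ, NormedSpace.exp_eq_tsum_div, tsum_mul_left]
  have hsummable : ∀ p : Fin n × Fin n,
      Summable (fun k : ℕ => w p.1 * w p.2 * (t p.1 p.2 ^ k / (k.factorial : ℝ))) :=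
    fun p => (Real.summable_pow_div_factorial _).mul_left _
  have hrw : ∑ i, ∑ j, v i * v j * Real.exp (-(μ * ‖x i - x j‖ ^ 2))
      = ∑' k : ℕ, ∑ p : Fin n × Fin n, w p.1 * w p.2 * (t p.1 p.2 ^ k / (k.factorial : ℝ)) := by
    rw [Summable.tsum_finsetSum (fun p _ => hsummable p), Fintype.sum_prod_type]
    exact Finset.sum_congr rfl fun i _ => Finset.sum_congr rfl fun j _ =>
      (hterm i j).trans (hexp i j)
  rw [hrw]
  refine tsum_nonneg fun k => ?_
  have hin : ∀ i j : Fin n, (inner ℝ (x i) (x j) : ℝ) = ∑ a, x i a * x j a := by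
    intro i j
    simp [PiLp.inner_apply, RCLike.inner_apply, mul_comm]
  have hk : ∑ p : Fin n × Fin n, w p.1 * w p.2 * (t p.1 p.2 ^ k / (k.factorial : ℝ))
      = ((2 * μ) ^ k / (k.factorial : ℝ)) * ∑ i, ∑ j, w i * w j * (∑ a, x i a * x j a) ^ k := by
    rw [Fintype.sum_prod_type, Finset.mul_sum]
    refine Finset.sum_congr rfl fun i _ => ?_
    rw [Finset.mul_sum]
    refine Finset.sum_congr rfl fun j _ => ?_
    simp only [ht, hin, mul_pow]
    ring
  rw [hk]
  have h2μ : (0:ℝ) ≤ 2 * μ := by linarith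
  exact mul_nonneg (div_nonneg (pow_nonneg h2μ k) (by positivity))
    (aux_inner_pow_psd k w (fun i a => x i a))

lemma aux_integral_exp {c : ℝ} (hc : 0 < c) :
    ∫ lam in Ioi (0:ℝ), Real.exp (-c * lam) = 1 / c := by
  have h := integral_comp_mul_left_Ioi (fun u => Real.exp (-u)) 0 hc
  simp only [mul_zero, smul_eq_mul, neg_mul] at h ⊢
  rw [h, integral_exp_neg_Ioi_zero, mul_one, one_div]

/-- The Cauchy kernel is positive semidefinite. -/
lemma aux_cauchy_psd {n q : ℕ} (x : Fin n → EuclideanSpace ℝ (Fin q)) (v : Fin n → ℝ)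
    {s : ℝ} (hs : 0 ≤ s) :
    0 ≤ ∑ i, ∑ j, v i * v j / (1 + s * ‖x i - x j‖ ^ 2) := by
  have hd : ∀ i j : Fin n, (0:ℝ) < 1 + s * ‖x i - x j‖ ^ 2 := fun i j => by positivity
  have hint : ∀ i j : Fin n, IntegrableOn
      (fun lam : ℝ => v i * v j * Real.exp (-(1 + s * ‖x i - x j‖ ^ 2) * lam)) (Ioi 0) := by
    intro i j
    exact (exp_neg_integrableOn_Ioi 0 (hd i j)).const_mul (v i * v j)
  have hval : ∀ i j : Fin n, v i * v j / (1 + s * ‖x i - x j‖ ^ 2)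
      = ∫ lam in Ioi (0:ℝ), v i * v j * Real.exp (-(1 + s * ‖x i - x j‖ ^ 2) * lam) := by
    intro i j
    rw [MeasureTheory.integral_const_mul, aux_integral_exp (hd i j)]
    ring
  have hsum : ∑ i, ∑ j, v i * v j / (1 + s * ‖x i - x j‖ ^ 2)
      = ∫ lam in Ioi (0:ℝ), ∑ p : Fin n × Fin n,
          v p.1 * v p.2 * Real.exp (-(1 + s * ‖x p.1 - x p.2‖ ^ 2) * lam) := by
    rw [MeasureTheory.integral_finset_sum (μ := volume.restrict (Ioi 0))
        (f := fun (p : Fin n × Fin n) (lam : ℝ) =>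
          v p.1 * v p.2 * Real.exp (-(1 + s * ‖x p.1 - x p.2‖ ^ 2) * lam))
        Finset.univ (fun p _ => hint p.1 p.2), Fintype.sum_prod_type]
    exact Finset.sum_congr rfl fun i _ => Finset.sum_congr rfl fun j _ => hval i j
  rw [hsum]
  refine setIntegral_nonneg measurableSet_Ioi fun lam hlam => ?_
  have hlam' : (0:ℝ) ≤ lam := le_of_lt hlam
  have key := aux_gaussian_psd x v (mul_nonneg hs hlam')
  calc (0:ℝ) ≤ Real.exp (-lam)
        * ∑ i, ∑ j, v i * v j * Real.exp (-((s * lam) * ‖x i - x j‖ ^ 2)) :=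
        mul_nonneg (Real.exp_nonneg _) key
    _ = ∑ p : Fin n × Fin n,
          v p.1 * v p.2 * Real.exp (-(1 + s * ‖x p.1 - x p.2‖ ^ 2) * lam) := by
        rw [Fintype.sum_prod_type, Finset.mul_sum]
        refine Finset.sum_congr rfl fun i _ => ?_
        rw [Finset.mul_sum]
        refine Finset.sum_congr rfl fun j _ => ?_
        rw [show (-(1 + s * ‖x i - x j‖ ^ 2) * lam)
            = (-lam) + (-((s * lam) * ‖x i - x j‖ ^ 2)) by ring, Real.exp_add]
        ring

/-- The elementwise logarithm of the Cauchy kernel matrix is conditionally positive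
semidefinite: for any points `x₁, …, xₙ ∈ ℝ^q` and any vector `v` with `∑ i, v i = 0`,
`∑ᵢⱼ vᵢ vⱼ log (1 + ‖xᵢ - xⱼ‖²) ≤ 0`. -/
theorem log_cauchy_kernel_cond_neg
    (n q : ℕ) (x : Fin n → EuclideanSpace ℝ (Fin q))
    (v : Fin n → ℝ) (hv : ∑ i, v i = 0) :
    ∑ i, ∑ j, v i * v j * Real.log (1 + ‖x i - x j‖ ^ 2) ≤ 0 := by
  have hd : ∀ i j : Fin n, (0:ℝ) ≤ ‖x i - x j‖ ^ 2 := fun i j => sq_nonneg _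
  have hpos : ∀ (i j : Fin n) (u : ℝ), u ∈ uIcc (0:ℝ) 1 → 0 < 1 + u * ‖x i - x j‖ ^ 2 := by
    intro i j u hu
    rw [Set.uIcc_of_le (by norm_num : (0:ℝ) ≤ 1)] at hu
    nlinarith [mul_nonneg hu.1 (hd i j)]
  have hcont : ∀ i j : Fin n, ContinuousOn
      (fun u : ℝ => ‖x i - x j‖ ^ 2 / (1 + u * ‖x i - x j‖ ^ 2)) (uIcc (0:ℝ) 1) := by
    intro i j
    exact continuousOn_const.div
      ((continuous_const.add (continuous_id.mul continuous_const)).continuousOn)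
      fun u hu => (hpos i j u hu).ne'
  have ftc : ∀ i j : Fin n, Real.log (1 + ‖x i - x j‖ ^ 2)
      = ∫ u in (0:ℝ)..1, ‖x i - x j‖ ^ 2 / (1 + u * ‖x i - x j‖ ^ 2) := by
    intro i j
    have hderiv : ∀ u ∈ uIcc (0:ℝ) 1,
        HasDerivAt (fun t : ℝ => Real.log (1 + t * ‖x i - x j‖ ^ 2))
          (‖x i - x j‖ ^ 2 / (1 + u * ‖x i - x j‖ ^ 2)) u := by
      intro u hu
      have h1 : HasDerivAt (fun t : ℝ => 1 + t * ‖x i - x j‖ ^ 2) (‖x i - x j‖ ^ 2) u := by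
        simpa using ((hasDerivAt_id u).mul_const (‖x i - x j‖ ^ 2)).const_add 1
      simpa using h1.log (hpos i j u hu).ne'
    have h := intervalIntegral.integral_eq_sub_of_hasDerivAt hderiv
      ((hcont i j).intervalIntegrable)
    rw [h]
    norm_num
  have hswap : ∑ i, ∑ j, v i * v j * Real.log (1 + ‖x i - x j‖ ^ 2)
      = ∫ u in (0:ℝ)..1, ∑ p : Fin n × Fin n,
          v p.1 * v p.2 * (‖x p.1 - x p.2‖ ^ 2 / (1 + u * ‖x p.1 - x p.2‖ ^ 2)) := by
    rw [intervalIntegral.integral_finset_sum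
        (f := fun (p : Fin n × Fin n) (u : ℝ) =>
          v p.1 * v p.2 * (‖x p.1 - x p.2‖ ^ 2 / (1 + u * ‖x p.1 - x p.2‖ ^ 2)))
        (fun p _ => ((continuousOn_const.mul (hcont p.1 p.2)).intervalIntegrable)),
      Fintype.sum_prod_type]
    refine Finset.sum_congr rfl fun i _ => Finset.sum_congr rfl fun j _ => ?_
    rw [ftc i j]
    exact (intervalIntegral.integral_const_mul (v i * v j)
      (fun u => ‖x i - x j‖ ^ 2 / (1 + u * ‖x i - x j‖ ^ 2))).symm
  rw [hswap, ← neg_nonneg, ← intervalIntegral.integral_neg]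
  refine intervalIntegral.integral_nonneg_of_ae_restrict (by norm_num) ?_
  have h0 : ∀ᵐ u : ℝ, u ≠ 0 := by
    have h1 : volume ({0} : Set ℝ) = 0 := Real.volume_singleton
    simpa using (measure_eq_zero_iff_ae_notMem.mp h1)
  filter_upwards [ae_restrict_mem measurableSet_Icc, ae_restrict_of_ae h0] with u hu hne
  have hu0 : 0 < u := lt_of_le_of_ne hu.1 (Ne.symm hne)
  have hC := aux_cauchy_psd x v (le_of_lt hu0)
  have hterm : ∀ i j : Fin n,
      v i * v j * (‖x i - x j‖ ^ 2 / (1 + u * ‖x i - x j‖ ^ 2))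
        = (1 / u) * (v i * v j) - (1 / u) * (v i * v j / (1 + u * ‖x i - x j‖ ^ 2)) := by
    intro i j
    have h1 : (1:ℝ) + u * ‖x i - x j‖ ^ 2 ≠ 0 := by positivity
    field_simp
    ring
  have hkey : ∑ p : Fin n × Fin n,
      v p.1 * v p.2 * (‖x p.1 - x p.2‖ ^ 2 / (1 + u * ‖x p.1 - x p.2‖ ^ 2))
        = (1 / u) * ((∑ i, v i) * (∑ j, v j))
          - (1 / u) * ∑ i, ∑ j, v i * v j / (1 + u * ‖x i - x j‖ ^ 2) := by
    rw [Fintype.sum_prod_type, Finset.sum_mul_sum, Finset.mul_sum, Finset.mul_sum,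
      ← Finset.sum_sub_distrib]
    refine Finset.sum_congr rfl fun i _ => ?_
    rw [Finset.mul_sum, Finset.mul_sum, ← Finset.sum_sub_distrib]
    exact Finset.sum_congr rfl fun j _ => hterm i j
  simp only [Pi.zero_apply, Pi.neg_apply]
  rw [neg_nonneg, hkey, hv]
  simp only [zero_mul, mul_zero, zero_sub, neg_nonpos]
  exact mul_nonneg (by positivity) hC
end

section
/- For any points x_1, …, x_n ∈ ℝ^q, let D be the n×n matrix with entries D_{ij} = log(1 + ‖x_i − x_j‖²) = −log(1/(1 + ‖x_i − x_j‖²)). Then −H D H is positive semidefinite, where H = I − (1/n)𝟙𝟙ᵀ is the centering matrix. -/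
open Matrix

open Finset Real

lemma pow_inner_sum_nonneg {n q : ℕ} (x : Fin n → EuclideanSpace ℝ (Fin q))
    (w : Fin n → ℝ) (k : ℕ) :
    0 ≤ ∑ i, ∑ j, w i * w j * (inner ℝ (x i) (x j) : ℝ) ^ k := by
  have hinner : ∀ i j, (inner ℝ (x i) (x j) : ℝ) = ∑ m, x i m * x j m := by
    intro i j
    simp [PiLp.inner_apply, RCLike.inner_apply, starRingEnd_apply, mul_comm]
  have key : ∀ i j : Fin n, w i * w j * (inner ℝ (x i) (x j) : ℝ) ^ k
      = ∑ a ∈ Fintype.piFinset (fun _ : Fin k => (univ : Finset (Fin q))),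
          (w i * ∏ l, x i (a l)) * (w j * ∏ l, x j (a l)) := by
    intro i j
    rw [hinner]
    have h1 : (∑ m, x i m * x j m) ^ k = ∏ _l : Fin k, (∑ m, x i m * x j m) := by
      simp [Finset.prod_const]
    rw [h1, Finset.prod_univ_sum, Finset.mul_sum]
    refine Finset.sum_congr rfl fun a _ => ?_
    rw [Finset.prod_mul_distrib]; ring
  simp_rw [key]
  have h2 : ∀ i : Fin n, (∑ j, ∑ a ∈ Fintype.piFinset (fun _ : Fin k => (univ : Finset (Fin q))),
      (w i * ∏ l, x i (a l)) * (w j * ∏ l, x j (a l)))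
      = ∑ a ∈ Fintype.piFinset (fun _ : Fin k => (univ : Finset (Fin q))),
        ∑ j, (w i * ∏ l, x i (a l)) * (w j * ∏ l, x j (a l)) := fun i => Finset.sum_comm
  simp_rw [h2]
  rw [Finset.sum_comm]
  refine Finset.sum_nonneg fun a _ => ?_
  have : (∑ i, ∑ j, (w i * ∏ l, x i (a l)) * (w j * ∏ l, x j (a l)))
      = (∑ i, w i * ∏ l, x i (a l)) ^ 2 := by
    rw [sq, Finset.sum_mul_sum]
  rw [this]
  positivity

lemma exp_inner_sum_nonneg {n q : ℕ} (x : Fin n → EuclideanSpace ℝ (Fin q))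
    (w : Fin n → ℝ) {c : ℝ} (hc : 0 ≤ c) :
    0 ≤ ∑ i, ∑ j, w i * w j * Real.exp (c * (inner ℝ (x i) (x j) : ℝ)) := by
  have hexp : ∀ s : ℝ, Real.exp s = ∑' k : ℕ, s ^ k / k.factorial := by
    intro s
    rw [Real.exp_eq_exp_ℝ, NormedSpace.exp_eq_tsum_div]
  have hsummable : ∀ i j : Fin n, Summable (fun k : ℕ =>
      w i * w j * ((c * (inner ℝ (x i) (x j) : ℝ)) ^ k / k.factorial)) := by
    intro i j
    exact (Real.summable_pow_div_factorial _).mul_left _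
  calc (0:ℝ) ≤ ∑' k : ℕ, ∑ i, ∑ j, w i * w j *
        ((c * (inner ℝ (x i) (x j) : ℝ)) ^ k / k.factorial) := by
        refine tsum_nonneg fun k => ?_
        have : ∀ i j : Fin n, w i * w j * ((c * (inner ℝ (x i) (x j) : ℝ)) ^ k / k.factorial)
            = (c ^ k / k.factorial) * (w i * w j * (inner ℝ (x i) (x j) : ℝ) ^ k) := by
          intro i j; rw [mul_pow]; ring
        simp_rw [this, ← Finset.mul_sum]
        have h0 : (0:ℝ) ≤ c ^ k / k.factorial := by positivity
        exact mul_nonneg h0 (pow_inner_sum_nonneg x w k)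
    _ = ∑ i, ∑ j, w i * w j * Real.exp (c * (inner ℝ (x i) (x j) : ℝ)) := by
        rw [Summable.tsum_finsetSum (fun i _ => summable_sum (fun j _ => hsummable i j))]
        refine Finset.sum_congr rfl fun i _ => ?_
        rw [Summable.tsum_finsetSum (fun j _ => hsummable i j)]
        refine Finset.sum_congr rfl fun j _ => ?_
        rw [hexp, ← tsum_mul_left]

lemma gaussian_sum_nonneg {n q : ℕ} (x : Fin n → EuclideanSpace ℝ (Fin q))
    (v : Fin n → ℝ) {t : ℝ} (ht : 0 ≤ t) :
    0 ≤ ∑ i, ∑ j, v i * v j * Real.exp (-(t * ‖x i - x j‖ ^ 2)) := by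
  have hnorm : ∀ i j : Fin n, ‖x i - x j‖ ^ 2
      = ‖x i‖ ^ 2 - 2 * (inner ℝ (x i) (x j) : ℝ) + ‖x j‖ ^ 2 := fun i j => norm_sub_sq_real _ _
  have key : ∀ i j : Fin n, v i * v j * Real.exp (-(t * ‖x i - x j‖ ^ 2))
      = (v i * Real.exp (-(t * ‖x i‖ ^ 2))) * (v j * Real.exp (-(t * ‖x j‖ ^ 2)))
        * Real.exp ((2 * t) * (inner ℝ (x i) (x j) : ℝ)) := by
    intro i j
    rw [hnorm]
    rw [show -(t * (‖x i‖ ^ 2 - 2 * (inner ℝ (x i) (x j) : ℝ) + ‖x j‖ ^ 2))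
        = (-(t * ‖x i‖ ^ 2)) + (-(t * ‖x j‖ ^ 2)) + (2 * t) * (inner ℝ (x i) (x j) : ℝ) by ring,
      Real.exp_add, Real.exp_add]
    ring
  simp_rw [key]
  have := exp_inner_sum_nonneg x (fun i => v i * Real.exp (-(t * ‖x i‖ ^ 2)))
    (by linarith : (0:ℝ) ≤ 2 * t)
  exact this

open Finset Real Set MeasureTheory

lemma integral_exp_neg_mul_Ioi_zero {c : ℝ} (hc : 0 < c) :
    ∫ t in Ioi (0:ℝ), Real.exp (-(t * c)) = c⁻¹ := by
  have := integral_comp_mul_right_Ioi (fun s => Real.exp (-s)) 0 hc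
  simp only [zero_mul, smul_eq_mul] at this
  rw [this, integral_exp_neg_Ioi_zero, mul_one]

lemma frullani_integrable {d : ℝ} (hd : 0 ≤ d) :
    IntegrableOn (fun t : ℝ => Real.exp (-t) * (1 - Real.exp (-(t * d))) / t) (Ioi 0) := by
  have hmeas : AEStronglyMeasurable (fun t : ℝ => Real.exp (-t) * (1 - Real.exp (-(t * d))) / t)
      (volume.restrict (Ioi 0)) := by
    refine ContinuousOn.aestronglyMeasurable ?_ measurableSet_Ioi
    refine ContinuousOn.div (Continuous.continuousOn (by continuity)) continuousOn_id
      fun t ht => ne_of_gt ht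
  have hg : IntegrableOn (fun t : ℝ => d * Real.exp (-t)) (Ioi 0) := by
    simpa [IntegrableOn] using (exp_neg_integrableOn_Ioi 0 one_pos).const_mul d
  refine hg.mono' hmeas ?_
  filter_upwards [ae_restrict_mem measurableSet_Ioi] with t ht
  have ht' : (0:ℝ) < t := ht
  have h1 : 1 - Real.exp (-(t * d)) ≤ t * d := by
    nlinarith [Real.add_one_le_exp (-(t * d))]
  have h2 : 0 ≤ 1 - Real.exp (-(t * d)) := by
    have : Real.exp (-(t * d)) ≤ 1 := Real.exp_le_one_iff.mpr (by nlinarith)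
    linarith
  have h3 : 0 < Real.exp (-t) := Real.exp_pos _
  rw [Real.norm_eq_abs, abs_of_nonneg (by positivity), div_le_iff₀ ht']
  nlinarith

lemma inner_exp_integral {d t : ℝ} (hd : 0 ≤ d) (ht : 0 < t) :
    ∫ u in Ioc (0:ℝ) d, Real.exp (-(t * (1 + u)))
      = Real.exp (-t) * (1 - Real.exp (-(t * d))) / t := by
  have h0 : ∫ u in Ioc (0:ℝ) d, Real.exp (-(t * (1 + u)))
      = ∫ u in (0:ℝ)..d, Real.exp (-(t * (1 + u))) := by
    rw [intervalIntegral.integral_of_le hd]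
  rw [h0]
  have hderiv : ∀ u ∈ uIcc (0:ℝ) d,
      HasDerivAt (fun u : ℝ => -Real.exp (-(t * (1 + u))) / t) (Real.exp (-(t * (1 + u)))) u := by
    intro u _
    have h1 : HasDerivAt (fun u : ℝ => -(t * (1 + u))) (-t) u := by
      have := ((hasDerivAt_id u).const_mul (-t)).add_const (-t)
      convert this using 1
      · rfl
      · rfl
      · funext v; simp only [id_eq]; ring
      · ring
    have h2 := (Real.hasDerivAt_exp _).comp u h1
    have h3 := (h2.div_const t).neg
    convert h3 using 1
    · rfl
    · rfl
    · funext v; simp [Function.comp, neg_div]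
    · rw [mul_neg, neg_div, neg_neg, mul_div_assoc, div_self ht.ne', mul_one]
  have hInt : IntervalIntegrable (fun u : ℝ => Real.exp (-(t * (1 + u)))) volume 0 d :=
    (Continuous.intervalIntegrable (by continuity) _ _)
  rw [intervalIntegral.integral_eq_sub_of_hasDerivAt hderiv hInt]
  have : -(t * (1 + d)) = -t + -(t * d) := by ring
  rw [this, Real.exp_add]
  simp only [add_zero, mul_one]
  field_simp
  ring

lemma frullani_log {d : ℝ} (hd : 0 ≤ d) :
    ∫ t in Ioi (0:ℝ), Real.exp (-t) * (1 - Real.exp (-(t * d))) / t = Real.log (1 + d) := by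
  have hprod : Integrable (Function.uncurry fun t u : ℝ => Real.exp (-(t * (1 + u))))
      ((volume.restrict (Ioi (0:ℝ))).prod (volume.restrict (Ioc (0:ℝ) d))) := by
    have hmeas : AEStronglyMeasurable (Function.uncurry fun t u : ℝ => Real.exp (-(t * (1 + u))))
        ((volume.restrict (Ioi (0:ℝ))).prod (volume.restrict (Ioc (0:ℝ) d))) :=
      (Continuous.aestronglyMeasurable
        (show Continuous fun p : ℝ × ℝ => Real.exp (-(p.1 * (1 + p.2))) by continuity))
    have hg : Integrable (fun p : ℝ × ℝ => Real.exp (-p.1) * 1)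
        ((volume.restrict (Ioi (0:ℝ))).prod (volume.restrict (Ioc (0:ℝ) d))) := by
      refine Integrable.mul_prod (f := fun t => Real.exp (-t)) (g := fun _ => (1:ℝ)) ?_ ?_
      · simpa [IntegrableOn] using (exp_neg_integrableOn_Ioi 0 one_pos)
      · rw [integrable_const_iff]
        right
        simp [isFiniteMeasure_iff, Measure.restrict_apply, measure_Ioc_lt_top]
    refine hg.mono' hmeas ?_
    rw [Measure.prod_restrict]
    filter_upwards [ae_restrict_mem (measurableSet_Ioi.prod measurableSet_Ioc)] with p hp
    obtain ⟨hp1, hp2, _⟩ := hp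
    rw [Function.uncurry]
    simp only [Real.norm_eq_abs, Real.abs_exp, mul_one]
    refine Real.exp_le_exp.mpr ?_
    nlinarith [le_of_lt (show (0:ℝ) < p.1 from hp1), le_of_lt (show (0:ℝ) < p.2 from hp2)]
  calc ∫ t in Ioi (0:ℝ), Real.exp (-t) * (1 - Real.exp (-(t * d))) / t
      = ∫ t in Ioi (0:ℝ), ∫ u in Ioc (0:ℝ) d, Real.exp (-(t * (1 + u))) := by
        refine setIntegral_congr_fun measurableSet_Ioi fun t ht => ?_
        rw [inner_exp_integral hd ht]
    _ = ∫ u in Ioc (0:ℝ) d, ∫ t in Ioi (0:ℝ), Real.exp (-(t * (1 + u))) :=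
        integral_integral_swap hprod
    _ = ∫ u in Ioc (0:ℝ) d, (1 + u)⁻¹ := by
        refine setIntegral_congr_fun measurableSet_Ioc fun u hu => ?_
        exact integral_exp_neg_mul_Ioi_zero (by nlinarith [hu.1])
    _ = Real.log (1 + d) := by
        rw [← intervalIntegral.integral_of_le hd]
        have : ∀ u : ℝ, (1 + u)⁻¹ = (fun v : ℝ => v⁻¹) (1 + u) := fun u => rfl
        rw [show (∫ u in (0:ℝ)..d, (1 + u)⁻¹) = ∫ u in (0:ℝ)..d, (fun v : ℝ => v⁻¹) (1 + u) from rfl,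
          intervalIntegral.integral_comp_add_left (fun v : ℝ => v⁻¹) 1]
        rw [add_zero, integral_inv_of_pos one_pos (by linarith), div_one]
lemma log_kernel_sum_nonpos {n q : ℕ} (x : Fin n → EuclideanSpace ℝ (Fin q))
    (u : Fin n → ℝ) (hu : ∑ i, u i = 0) :
    ∑ i, ∑ j, u i * u j * Real.log (1 + ‖x i - x j‖ ^ 2) ≤ 0 := by
  have hd : ∀ i j : Fin n, (0:ℝ) ≤ ‖x i - x j‖ ^ 2 := fun i j => sq_nonneg _
  have step1 : ∑ i, ∑ j, u i * u j * Real.log (1 + ‖x i - x j‖ ^ 2)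
      = ∫ t in Ioi (0:ℝ), ∑ i, ∑ j,
          u i * u j * (Real.exp (-t) * (1 - Real.exp (-(t * ‖x i - x j‖ ^ 2))) / t) := by
    rw [integral_finset_sum univ fun i _ => integrable_finset_sum univ fun j _ =>
      ((frullani_integrable (hd i j)).const_mul (u i * u j))]
    refine Finset.sum_congr rfl fun i _ => ?_
    rw [integral_finset_sum univ fun j _ => ((frullani_integrable (hd i j)).const_mul (u i * u j))]
    refine Finset.sum_congr rfl fun j _ => ?_
    rw [MeasureTheory.integral_const_mul, frullani_log (hd i j)]
  rw [step1]
  refine setIntegral_nonpos measurableSet_Ioi fun t ht => ?_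
  have ht' : (0:ℝ) < t := ht
  have key : ∀ i j : Fin n, u i * u j * (Real.exp (-t) * (1 - Real.exp (-(t * ‖x i - x j‖ ^ 2))) / t)
      = (Real.exp (-t) / t) * (u i * u j)
        - (Real.exp (-t) / t) * (u i * u j * Real.exp (-(t * ‖x i - x j‖ ^ 2))) := by
    intro i j; field_simp
  simp_rw [key, Finset.sum_sub_distrib, ← Finset.mul_sum]
  simp only [hu, mul_zero, zero_mul, Finset.sum_const_zero, zero_sub, neg_nonpos]
  exact mul_nonneg (by positivity) (gaussian_sum_nonneg x u ht'.le)


open Matrix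


/-- For any points `x₁, …, xₙ ∈ ℝ^q`, letting `D` be the matrix with entries
`Dᵢⱼ = log (1 + ‖xᵢ - xⱼ‖²)`, the double-centered matrix `-H * D * H` is positive
semidefinite, where `H = I - (1/n) 𝟙𝟙ᵀ` is the centering matrix. -/
theorem neg_double_centered_log_cauchy_posSemidef
    (n q : ℕ) (hn : 0 < n) (x : Fin n → EuclideanSpace ℝ (Fin q))
    (D : Matrix (Fin n) (Fin n) ℝ)
    (hD : D = Matrix.of fun i j : Fin n => Real.log (1 + ‖x i - x j‖ ^ 2))
    (H : Matrix (Fin n) (Fin n) ℝ)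
    (hH : H = 1 - (n : ℝ)⁻¹ • Matrix.of (fun _ _ : Fin n => (1 : ℝ))) :
    (-(H * D * H)).PosSemidef := by

  have hn' : (n:ℝ) ≠ 0 := Nat.cast_ne_zero.mpr hn.ne'
  have hHsymm : Hᵀ = H := by
    rw [hH, Matrix.transpose_sub, Matrix.transpose_one, Matrix.transpose_smul]
    congr 1
  have hDsymm : Dᵀ = D := by
    rw [hD]; ext i j
    simp only [Matrix.transpose_apply, Matrix.of_apply]
    rw [norm_sub_rev]
  rw [Matrix.posSemidef_iff_dotProduct_mulVec]
  constructor
  · show (-(H * D * H))ᴴ = -(H * D * H)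
    rw [Matrix.conjTranspose_neg, Matrix.conjTranspose_eq_transpose_of_trivial,
      Matrix.transpose_mul, Matrix.transpose_mul, hDsymm, hHsymm, Matrix.mul_assoc]
  · intro v
    set u := H *ᵥ v with hudef
    have hvH : v ᵥ* H = u := by rw [← hHsymm, Matrix.vecMul_transpose]
    have hui : ∀ i, u i = v i - (n:ℝ)⁻¹ * ∑ j, v j := by
      intro i
      simp only [hudef, Matrix.mulVec, dotProduct, hH, Matrix.sub_apply,
        Matrix.smul_apply, Matrix.of_apply, Matrix.one_apply, smul_eq_mul, mul_one,
        sub_mul, Finset.sum_sub_distrib, ← Finset.mul_sum]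
      congr 1
      simp [Finset.sum_ite_eq, ite_mul]
    have hsumu : ∑ i, u i = 0 := by
      simp only [hui, Finset.sum_sub_distrib, Finset.sum_const, Finset.card_univ,
        Fintype.card_fin, nsmul_eq_mul]
      rw [← mul_assoc, mul_inv_cancel₀ hn', one_mul, sub_self]
    have hquad : star v ⬝ᵥ (-(H * D * H)) *ᵥ v
        = -(u ⬝ᵥ D *ᵥ u) := by
      rw [star_trivial, Matrix.neg_mulVec, dotProduct_neg, ← Matrix.mulVec_mulVec,
        ← Matrix.mulVec_mulVec, dotProduct_mulVec v H, hvH]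
    rw [hquad, Left.nonneg_neg_iff]
    have hexpand : u ⬝ᵥ D *ᵥ u = ∑ i, ∑ j, u i * u j * Real.log (1 + ‖x i - x j‖ ^ 2) := by
      simp only [dotProduct, Matrix.mulVec, hD, Matrix.of_apply, Finset.mul_sum]
      exact Finset.sum_congr rfl fun i _ => Finset.sum_congr rfl fun j _ => by ring
    rw [hexpand]
    exact log_kernel_sum_nonpos x u hsumu
end

section
/- (Schoenberg) Let D be a symmetric n×n real matrix with zero diagonal such that −(1/2) H D H is positive semidefinite, where H = I − (1/n)𝟙𝟙ᵀ is the centering matrix. Then there exist points y_1, …, y_n ∈ ℝ^n such that ‖y_i − y_j‖² = D_{ij} for all i, j, i.e., D admits an isometric Euclidean embedding as a matrix of squared distances. -/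
open Matrix

/-- (Schoenberg) Let `D` be a symmetric `n × n` real matrix with zero diagonal such
that `-(1/2) * H * D * H` is positive semidefinite, where `H = I - (1/n) 𝟙𝟙ᵀ` is the
centering matrix.  Then there exist points `y₁, …, yₙ ∈ ℝⁿ` with
`‖yᵢ - yⱼ‖² = Dᵢⱼ` for all `i, j`. -/
theorem schoenberg_euclidean_embedding
    (n : ℕ) (hn : 0 < n) (D : Matrix (Fin n) (Fin n) ℝ)
    (hsymm : D.IsSymm) (hdiag : ∀ i, D i i = 0)
    (H : Matrix (Fin n) (Fin n) ℝ)
    (hH : H = 1 - (n : ℝ)⁻¹ • Matrix.of (fun _ _ : Fin n => (1 : ℝ)))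
    (hpsd : (-((1 : ℝ) / 2) • (H * D * H)).PosSemidef) :
    ∃ y : Fin n → EuclideanSpace ℝ (Fin n), ∀ i j, ‖y i - y j‖ ^ 2 = D i j := by
  obtain ⟨A, hA⟩ : ∃ B : Matrix (Fin n) (Fin n) ℝ, (-((1 : ℝ) / 2) • (H * D * H)) = Bᴴ * B := by
    classical
    open scoped MatrixOrder in
    obtain ⟨X, hX, -, hXX⟩ :=
        CFC.exists_sqrt_of_isSelfAdjoint_of_quasispectrumRestricts hpsd.isHermitian
          (QuasispectrumRestricts.nnreal_of_nonneg hpsd.nonneg)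
    have hX' : Xᴴ = X := hX
    exact ⟨X, by rw [hX']; exact hXX.symm⟩
  set c : ℝ := (n : ℝ)⁻¹ with hc
  have hsym' : ∀ i j, D i j = D j i := fun i j => (congrFun (congrFun hsymm j) i : Dᵀ j i = D j i)
  -- entries of H * D * H
  have hent : ∀ i j, (H * D * H) i j =
      D i j - c * (∑ k, D i k) - c * (∑ k, D k j) + c ^ 2 * (∑ k, ∑ l, D k l) := by
    intro i j
    have hHab : ∀ a b, H a b = (if a = b then (1 : ℝ) else 0) - c := by
      intro a b
      simp [hH, Matrix.one_apply, Matrix.sub_apply, hc]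
    rw [Matrix.mul_apply]
    simp only [Matrix.mul_apply, hHab]
    have h1 : ∀ k, (∑ l, ((if i = l then (1 : ℝ) else 0) - c) * D l k)
        = D i k - c * ∑ l, D l k := by
      intro k
      simp [sub_mul, Finset.sum_sub_distrib, ite_mul, Finset.sum_ite_eq, Finset.mul_sum]
    simp only [h1]
    rw [show (∑ k, ∑ l, D k l) = ∑ k, ∑ l, D l k from Finset.sum_comm]
    simp only [mul_sub, sub_mul, mul_ite, mul_one, mul_zero, Finset.sum_sub_distrib,
      Finset.sum_ite_eq', Finset.mem_univ, if_true, Finset.mul_sum, ← mul_assoc, ← sq,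
      mul_comm _ c]
    ring_nf
  -- Gram entries
  have hG : ∀ i j, (∑ k, A k i * A k j) = (-((1 : ℝ) / 2) • (H * D * H)) i j := by
    intro i j
    rw [hA, Matrix.mul_apply]
    simp [Matrix.conjTranspose_apply]
  have hrow : ∀ i, (∑ k, D k i) = ∑ k, D i k := by
    intro i
    exact Finset.sum_congr rfl fun k _ => (hsym' k i)
  -- key identity
  have key : ∀ i j, (∑ k, A k i * A k i) + (∑ k, A k j * A k j)
      - 2 * (∑ k, A k i * A k j) = D i j := by
    intro i j
    rw [hG, hG, hG]
    simp only [Matrix.smul_apply, hent, smul_eq_mul, hdiag, hrow]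
    ring
  set y : Fin n → EuclideanSpace ℝ (Fin n) := fun i => WithLp.toLp 2 (fun k => A k i) with hy
  have hin : ∀ i j, (inner ℝ (y i) (y j) : ℝ) = ∑ k, A k i * A k j := by
    intro i j
    simp [hy, PiLp.inner_apply, RCLike.inner_apply, mul_comm]
  refine ⟨y, fun i j => ?_⟩
  rw [← real_inner_self_eq_norm_sq, inner_sub_left, inner_sub_right, inner_sub_right,
    hin, hin, hin, hin, ← key i j]
  rw [show (∑ k, A k j * A k i) = ∑ k, A k i * A k j from
    Finset.sum_congr rfl fun k _ => mul_comm _ _]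
  ring
end
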